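/- arXiv:0907.5575 — 7 statements merged into one kernel-verified Lean document; each statement's English description precedes it below -/
import Mathlib

section
/- Let θ be a root of unity (in a fixed algebraic closure of ℚ) with θ^6 ≠ 1, and let (a, b) be a pair of rational numbers different from the five pairs (0,0), (1,0), (−1,0), (0,1), (0,−1). Then α = a + bθ is nonzero and α is not a root of unity. -/
/-!
If `a + bθ = 0` with `b ≠ 0`, then `θ` is a rational root of unity, hence `±1`. If `α = a + bθ` has absolute value `1`, multiplying by `ᾱ = a + bθ⁻¹` gives
`a² + b² + ab(θ + θ⁻¹) = 1`. When `ab ≠ 0` this makes the trace `θ + θ⁻¹` of the root of unity `θ`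
rational, hence a rational algebraic integer of absolute value at most `2`, i.e. one of
`-2, …, 2`; this forces `θ⁶ = 1` or `θ = ±i`. In the Gaussian case `α + α⁻¹ = 2a` is again such an
integer, and `a² + b² = 1` with `ab ≠ 0` leaves `(2b)² = 3`. So `ab = 0` and `a² + b² = 1`.
-/

theorem isIntegral_of_pow_eq_one {R B : Type*} [CommRing R] [Ring B] [Algebra R B] {x : B} {n : ℕ}
    (hn : n ≠ 0) (hx : x ^ n = 1) : IsIntegral R x :=
  .of_pow (Nat.pos_of_ne_zero hn) (hx ▸ isIntegral_one)

theorem Rat.eq_one_or_eq_neg_one_of_cast_pow_eq_one {K : Type*} [Field K] [CharZero K] {q : ℚ}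
    {n : ℕ} (hn : n ≠ 0) (hq : (q : K) ^ n = 1) : q = 1 ∨ q = -1 := by
  rcases pow_eq_one_iff_cases.mp (by exact_mod_cast hq : q ^ n = 1) with h | h | h
  exacts [absurd h hn, .inl h, .inr h.1]

theorem Rat.sq_ne_three (x : ℚ) : x ^ 2 ≠ 3 := by
  intro hx
  have h3 : IsSquare (3 : ℚ) := ⟨x, by rw [← hx, sq]⟩
  rw [Rat.isSquare_iff] at h3
  norm_num at h3

theorem exists_int_eq_add_inv_of_pow_eq_one {z : ℂ} {n : ℕ} (hn : n ≠ 0) (hz : z ^ n = 1)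
    {q : ℚ} (hq : z + z⁻¹ = q) : ∃ k : ℤ, q = k ∧ |k| ≤ 2 := by
  have hint : IsIntegral ℤ (algebraMap ℚ ℂ q) := by
    rw [eq_ratCast, ← hq]
    exact (isIntegral_of_pow_eq_one hn hz).add
      (isIntegral_of_pow_eq_one hn (by rw [inv_pow, hz, inv_one]))
  obtain ⟨k, rfl⟩ := IsIntegrallyClosed.isIntegral_iff.mp
    ((isIntegral_algebraMap_iff (algebraMap ℚ ℂ).injective).mp hint)
  refine ⟨k, rfl, ?_⟩
  have hz₁ : ‖z‖ = 1 := Complex.norm_eq_one_of_pow_eq_one hz hn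
  have hk : ‖(k : ℂ)‖ ≤ 2 :=
    calc ‖(k : ℂ)‖ = ‖z + z⁻¹‖ := by rw [hq]; simp
      _ ≤ ‖z‖ + ‖z⁻¹‖ := norm_add_le _ _
      _ = 2 := by rw [norm_inv, hz₁]; norm_num
  rw [Complex.norm_intCast] at hk
  exact_mod_cast hk

theorem pow_six_eq_one_or_sq_eq_neg_one {K : Type*} [Field K] {z : K} (hz : z ≠ 0) {k : ℤ}
    (hk : |k| ≤ 2) (h : z + z⁻¹ = k) : z ^ 6 = 1 ∨ z ^ 2 = -1 := by
  have hquad : z ^ 2 + 1 = k * z := by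
    rw [← h, add_mul, inv_mul_cancel₀ hz]; ring
  obtain ⟨hk₁, hk₂⟩ := abs_le.mp hk
  interval_cases k <;> push_cast at hquad
  · have : z = -1 := by
      have : (z + 1) ^ 2 = 0 := by linear_combination hquad
      linear_combination pow_eq_zero_iff two_ne_zero |>.mp this
    left; rw [this]; norm_num
  · left; linear_combination (z - 1) * (z ^ 3 + 1) * hquad
  · right; linear_combination hquad
  · left; linear_combination (z + 1) * (z ^ 3 - 1) * hquad
  · have : z = 1 := by
      have : (z - 1) ^ 2 = 0 := by linear_combination hquad
      linear_combination pow_eq_zero_iff two_ne_zero |>.mp this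
    left; rw [this]; norm_num

theorem ratCast_add_mul_ne_zero {K : Type*} [Field K] [CharZero K] {θ : K} {m : ℕ} (hm : m ≠ 0)
    (hθ : θ ^ m = 1) (hθ6 : θ ^ 6 ≠ 1) {a b : ℚ} (hab : (a, b) ≠ (0, 0)) :
    (a : K) + b * θ ≠ 0 := by
  intro h0
  by_cases hb : b = 0
  · subst hb
    exact hab (by simpa using h0)
  · have hθq : θ = ((-a / b : ℚ) : K) := by
      push_cast
      rw [eq_div_iff (by exact_mod_cast hb)]
      linear_combination h0
    rcases Rat.eq_one_or_eq_neg_one_of_cast_pow_eq_one hm (hθq ▸ hθ) with h1 | h1 <;>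
      exact hθ6 (by rw [hθq, h1]; norm_num)

theorem inv_ratCast_add_mul {θ : ℂ} (hθ : ‖θ‖ = 1) {a b : ℚ} (h : ‖(a : ℂ) + b * θ‖ = 1) :
    ((a : ℂ) + b * θ)⁻¹ = a + b * θ⁻¹ := by
  rw [Complex.inv_eq_conj h, Complex.inv_eq_conj hθ, map_add, map_mul, map_ratCast, map_ratCast]

theorem sq_add_sq_add_mul_add_inv_eq_one {θ : ℂ} (hθ : ‖θ‖ = 1) {a b : ℚ}
    (h : ‖(a : ℂ) + b * θ‖ = 1) : (a : ℂ) ^ 2 + b ^ 2 + a * b * (θ + θ⁻¹) = 1 := by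
  have hα : (a : ℂ) + b * θ ≠ 0 := norm_ne_zero_iff.mp (h ▸ one_ne_zero)
  have hθ0 : θ ≠ 0 := norm_ne_zero_iff.mp (hθ ▸ one_ne_zero)
  have := mul_inv_cancel₀ hα
  rw [inv_ratCast_add_mul hθ h] at this
  linear_combination this - (b : ℂ) ^ 2 * mul_inv_cancel₀ hθ0

theorem mul_eq_zero_of_sq_eq_neg_one {θ : ℂ} (hθ : θ ^ 2 = -1) {a b : ℚ} {n : ℕ} (hn : n ≠ 0)
    (h : ((a : ℂ) + b * θ) ^ n = 1) : a * b = 0 := by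
  have hθinv : θ⁻¹ = -θ := inv_eq_of_mul_eq_one_right (by linear_combination -hθ)
  have hθ₁ : ‖θ‖ = 1 :=
    Complex.norm_eq_one_of_pow_eq_one (n := 4) (by rw [pow_mul' θ 2 2, hθ]; norm_num) (by norm_num)
  have hα₁ : ‖(a : ℂ) + b * θ‖ = 1 := Complex.norm_eq_one_of_pow_eq_one h hn
  have hsq : a ^ 2 + b ^ 2 = 1 := by
    have := sq_add_sq_add_mul_add_inv_eq_one hθ₁ hα₁
    rw [hθinv, add_neg_cancel, mul_zero, add_zero] at this
    exact_mod_cast this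
  obtain ⟨j, hj, hj₂⟩ := exists_int_eq_add_inv_of_pow_eq_one hn h (q := 2 * a)
    (by rw [inv_ratCast_add_mul hθ₁ hα₁, hθinv]; push_cast; ring)
  have h2b : (2 * b) ^ 2 = 4 - (j : ℚ) ^ 2 := by rw [← hj]; linear_combination 4 * hsq
  have hj_sq : (j : ℚ) ^ 2 = 0 ∨ (j : ℚ) ^ 2 = 1 ∨ (j : ℚ) ^ 2 = 4 := by
    obtain ⟨hj₁, hj₂⟩ := abs_le.mp hj₂
    interval_cases j <;> norm_num
  rcases hj_sq with h0 | h1 | h4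
  · have : (2 * a) ^ 2 = 0 := by rw [hj, h0]
    exact mul_eq_zero_of_left (by simpa using this) b
  · exact absurd (by rw [h2b, h1]; norm_num) (Rat.sq_ne_three (2 * b))
  · have : (2 * b) ^ 2 = 0 := by rw [h2b, h4]; norm_num
    exact mul_eq_zero_of_right a (by simpa using this)

theorem mul_eq_zero_of_add_mul_pow_eq_one {θ : ℂ} {m : ℕ} (hm : m ≠ 0) (hθ : θ ^ m = 1)
    (hθ6 : θ ^ 6 ≠ 1) {a b : ℚ} {n : ℕ} (hn : n ≠ 0) (h : ((a : ℂ) + b * θ) ^ n = 1) :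
    a * b = 0 := by
  by_contra hab
  have htrace : θ + θ⁻¹ = ((1 - a ^ 2 - b ^ 2) / (a * b) : ℚ) := by
    push_cast
    rw [eq_div_iff (by exact_mod_cast hab)]
    linear_combination sq_add_sq_add_mul_add_inv_eq_one
      (Complex.norm_eq_one_of_pow_eq_one hθ hm) (Complex.norm_eq_one_of_pow_eq_one h hn)
  obtain ⟨k, hqk, hk⟩ := exists_int_eq_add_inv_of_pow_eq_one hm hθ htrace
  rw [hqk, Rat.cast_intCast] at htrace
  have hθ0 : θ ≠ 0 := by rintro rfl; simp [zero_pow hm] at hθ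
  rcases pow_six_eq_one_or_sq_eq_neg_one hθ0 hk htrace with h6 | hi
  exacts [hθ6 h6, hab (mul_eq_zero_of_sq_eq_neg_one hi hn h)]

/-- Let `θ` be a root of unity (in the algebraic closure of `ℚ` inside `ℂ`) with `θ^6 ≠ 1`, and
let `(a, b)` be a pair of rational numbers different from the five pairs
`(0,0), (1,0), (−1,0), (0,1), (0,−1)`. Then `α = a + bθ` is nonzero and is not a root of unity. -/
theorem stmt1 (θ : ℂ) (hθ : ∃ n : ℕ, 0 < n ∧ θ ^ n = 1) (hθ6 : θ ^ 6 ≠ 1)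
    (a b : ℚ)
    (hab : (a, b) ≠ (0, 0) ∧ (a, b) ≠ (1, 0) ∧ (a, b) ≠ (-1, 0) ∧
      (a, b) ≠ (0, 1) ∧ (a, b) ≠ (0, -1)) :
    (a : ℂ) + (b : ℂ) * θ ≠ 0 ∧
      ∀ n : ℕ, 0 < n → ((a : ℂ) + (b : ℂ) * θ) ^ n ≠ 1 := by
  obtain ⟨m, hm, hθm⟩ := hθ
  refine ⟨ratCast_add_mul_ne_zero hm.ne' hθm hθ6 hab.1, fun n hn hαn ↦ ?_⟩
  have hab0 := mul_eq_zero_of_add_mul_pow_eq_one hm.ne' hθm hθ6 hn.ne' hαn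
  have hsq : a ^ 2 + b ^ 2 = 1 := by
    have hkey := sq_add_sq_add_mul_add_inv_eq_one
      (Complex.norm_eq_one_of_pow_eq_one hθm hm.ne') (Complex.norm_eq_one_of_pow_eq_one hαn hn.ne')
    rw [← Rat.cast_mul, hab0, Rat.cast_zero, zero_mul, add_zero] at hkey
    exact_mod_cast hkey
  rcases mul_eq_zero.mp hab0 with rfl | rfl
  · rcases (by simpa using hsq : b = 1 ∨ b = -1) with rfl | rfl
    exacts [hab.2.2.2.1 rfl, hab.2.2.2.2 rfl]
  · rcases (by simpa using hsq : a = 1 ∨ a = -1) with rfl | rfl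
    exacts [hab.2.1 rfl, hab.2.2.1 rfl]
end

section
/- Let K be a field of characteristic 0 and let f ∈ K[X] be a nonzero univariate polynomial of degree at most d (with d ≥ 2) having at most m nonzero monomials. Then the number of prime numbers p for which f(X) is identically zero modulo X^p − 1 (i.e., f ≡ 0 in K[X]/(X^p − 1)) is strictly less than m · log₂ d. -/
open Polynomial

private lemma dvd_Xpow_sub (K : Type*) [Field K] (p i : ℕ) :
    (X ^ p - 1 : K[X]) ∣ X ^ i - X ^ (i % p) := by
  have h1 : (X ^ p - 1 : K[X]) ∣ (X ^ p) ^ (i / p) - 1 := by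
    simpa using sub_dvd_pow_sub_pow (X ^ p : K[X]) 1 (i / p)
  have h2 : (X ^ i - X ^ (i % p) : K[X]) = ((X ^ p) ^ (i / p) - 1) * X ^ (i % p) := by
    rw [sub_mul, one_mul, ← pow_mul, ← pow_add, Nat.div_add_mod]
  rw [h2]
  exact h1.mul_right _

private lemma key_lemma (K : Type*) [Field K] (f : K[X]) (p : ℕ) (hp : 0 < p)
    (hdvd : (X ^ p - 1 : K[X]) ∣ f) {i0 : ℕ} (hi0 : i0 ∈ f.support) :
    ∃ j ∈ f.support, j ≠ i0 ∧ j % p = i0 % p := by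
  by_contra hcon
  push_neg at hcon
  set g : K[X] := ∑ i ∈ f.support, C (f.coeff i) * X ^ (i % p) with hg
  have hfg : (X ^ p - 1 : K[X]) ∣ f - g := by
    have hrw : f - g = ∑ i ∈ f.support, C (f.coeff i) * (X ^ i - X ^ (i % p)) := by
      conv_lhs => rw [f.as_sum_support]
      rw [hg, ← Finset.sum_sub_distrib]
      refine Finset.sum_congr rfl fun i _ => ?_
      rw [mul_sub, C_mul_X_pow_eq_monomial, C_mul_X_pow_eq_monomial]
    rw [hrw]
    exact Finset.dvd_sum fun i _ => Dvd.dvd.mul_left (dvd_Xpow_sub K p i) _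
  have hgd : (X ^ p - 1 : K[X]) ∣ g := (dvd_sub_right hdvd).mp hfg
  have hg0 : g = 0 := by
    refine eq_zero_of_dvd_of_degree_lt hgd ?_
    have h1 : g.degree < (p : WithBot ℕ) := by
      refine lt_of_le_of_lt (degree_sum_le _ _) ?_
      rw [Finset.sup_lt_iff (by exact_mod_cast WithBot.bot_lt_coe p)]
      intro i _
      refine lt_of_le_of_lt (degree_C_mul_X_pow_le _ _) ?_
      exact_mod_cast Nat.mod_lt i hp
    have h2 : ((X : K[X]) ^ p - 1).degree = (p : WithBot ℕ) := by
      simpa using degree_X_pow_sub_C hp (1 : K)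
    rw [h2]; exact h1
  have hc : g.coeff (i0 % p) = f.coeff i0 := by
    rw [hg, finset_sum_coeff]
    rw [Finset.sum_eq_single i0]
    · simp
    · intro b hb hbne
      rw [coeff_C_mul, coeff_X_pow, if_neg (fun h => hcon b hb hbne (by omega)), mul_zero]
    · intro h; exact absurd hi0 h
  rw [hg0, coeff_zero] at hc
  exact (mem_support_iff.mp hi0) hc.symm

/-- Let `K` be a field of characteristic 0 and `f ∈ K[X]` a nonzero polynomial of degree at most
`d` (with `d ≥ 2`) having at most `m` nonzero monomials. Then the set of primes `p` such that
`f` is identically zero modulo `X^p − 1` (i.e. `X^p − 1` divides `f`) is finite, of cardinality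
strictly less than `m · log₂ d`. -/
theorem stmt3 (K : Type*) [Field K] [CharZero K] (f : K[X]) (d m : ℕ)
    (hf : f ≠ 0) (hd : 2 ≤ d) (hdeg : f.natDegree ≤ d) (hm : f.support.card ≤ m) :
    {p : ℕ | p.Prime ∧ (X ^ p - 1 : K[X]) ∣ f}.Finite ∧
      ({p : ℕ | p.Prime ∧ (X ^ p - 1 : K[X]) ∣ f}.ncard : ℝ) < m * Real.logb 2 d := by
  have hne : f.support.Nonempty := Polynomial.nonempty_support_iff.mpr hf
  set i0 := f.support.min' hne with hi0def
  have hi0 : i0 ∈ f.support := f.support.min'_mem hne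
  set N : ℕ := ∏ j ∈ f.support.erase i0, (j - i0) with hN
  have hNpos : 0 < N := by
    refine Finset.prod_pos fun j hj => ?_
    have hjm := Finset.mem_of_mem_erase hj
    have hjne := Finset.ne_of_mem_erase hj
    have : i0 ≤ j := f.support.min'_le j hjm
    omega
  -- every prime in the set divides N
  have hdvdN : ∀ p : ℕ, p.Prime → (X ^ p - 1 : K[X]) ∣ f → p ∣ N := by
    intro p hp hpd
    obtain ⟨j, hj, hjne, hjmod⟩ := key_lemma K f p hp.pos hpd hi0
    have hle : i0 ≤ j := f.support.min'_le j hj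
    have hpj : p ∣ j - i0 := (Nat.modEq_iff_dvd' hle).mp hjmod.symm
    exact hpj.trans (Finset.dvd_prod_of_mem _ (Finset.mem_erase.mpr ⟨hjne, hj⟩))
  have hsub : {p : ℕ | p.Prime ∧ (X ^ p - 1 : K[X]) ∣ f} ⊆ ↑N.primeFactors := by
    intro p hp
    exact Finset.mem_coe.mpr (Nat.mem_primeFactors.mpr ⟨hp.1, hdvdN p hp.1 hp.2, hNpos.ne'⟩)
  have hfin : {p : ℕ | p.Prime ∧ (X ^ p - 1 : K[X]) ∣ f}.Finite :=
    Set.Finite.subset N.primeFactors.finite_toSet hsub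
  refine ⟨hfin, ?_⟩
  set k := N.primeFactors.card with hk
  have hcard : {p : ℕ | p.Prime ∧ (X ^ p - 1 : K[X]) ∣ f}.ncard ≤ k := by
    rw [hk, ← Set.ncard_coe_finset]
    exact Set.ncard_le_ncard hsub N.primeFactors.finite_toSet
  -- 2^k ≤ N
  have h2k : 2 ^ k ≤ N := by
    calc 2 ^ k = ∏ _p ∈ N.primeFactors, 2 := by rw [Finset.prod_const, hk]
    _ ≤ ∏ p ∈ N.primeFactors, p :=
        Finset.prod_le_prod' fun p hp => (Nat.prime_of_mem_primeFactors hp).two_le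
    _ ≤ N := Nat.le_of_dvd hNpos (Nat.prod_primeFactors_dvd N)
  -- N ≤ d^(m-1)
  have hm1 : 1 ≤ m := le_trans (Finset.card_pos.mpr hne) hm
  have hNle : N ≤ d ^ (m - 1) := by
    calc N ≤ d ^ (f.support.erase i0).card := by
          refine Finset.prod_le_pow_card _ _ _ fun j hj => ?_
          have := le_natDegree_of_mem_supp j (Finset.mem_of_mem_erase hj)
          omega
    _ ≤ d ^ (m - 1) := by
          refine Nat.pow_le_pow_right (by omega) ?_
          rw [Finset.card_erase_of_mem hi0]
          omega
  -- real inequality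
  have hlogpos : 0 < Real.logb 2 d := Real.logb_pos one_lt_two (by exact_mod_cast hd)
  have hkle : (k : ℝ) ≤ (m - 1 : ℕ) * Real.logb 2 d := by
    have h1 : ((2 : ℝ) ^ k) ≤ ((d : ℝ) ^ (m - 1 : ℕ)) := by
      calc ((2:ℝ) ^ k) ≤ (N : ℝ) := by exact_mod_cast h2k
      _ ≤ _ := by exact_mod_cast hNle
    have h2 : Real.logb 2 ((2:ℝ) ^ k) ≤ Real.logb 2 ((d:ℝ) ^ (m - 1 : ℕ)) := by
      rw [Real.logb_le_logb one_lt_two (by positivity) (by positivity)]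
      exact h1
    rwa [Real.logb_pow, Real.logb_pow, Real.logb_self_eq_one one_lt_two, mul_one] at h2
  calc ({p : ℕ | p.Prime ∧ (X ^ p - 1 : K[X]) ∣ f}.ncard : ℝ) ≤ (k : ℝ) := by
        exact_mod_cast hcard
  _ ≤ (m - 1 : ℕ) * Real.logb 2 d := hkle
  _ < m * Real.logb 2 d := by
        refine mul_lt_mul_of_pos_right ?_ hlogpos
        exact_mod_cast Nat.sub_lt hm1 one_pos
end

section
/- Let K be a field of characteristic 0, let d ≥ 2 and m ≥ 1, let 𝒫 be a set of at least m · log₂ d prime numbers, and let H be the set of all p-th roots of unity (in a fixed algebraic closure of K) for all p ∈ 𝒫. Then H is a hitting set for the set of all polynomials f ∈ K[X] of degree at most d with at most m nonzero monomials. -/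
/-! If `f` vanishes at all `p`-th roots of unity, then `X ^ p - 1 ∣ f`, so reducing exponents
modulo `p` kills `f`: in each residue class modulo `p` the coefficients of `f` sum to zero. Hence
the leading exponent `e` of `f` is congruent modulo `p` to another exponent `j` of `f`. Doing this
for every `p ∈ Ps`, the product of the primes, which is at least `2 ^ #Ps ≥ d ^ m`, divides
`∏ (e - j)` over the at most `m - 1` other exponents `j`, a positive number at most
`d ^ (m - 1) < d ^ m`. -/

open Polynomial

/-- `H` is a hitting set for a set `F` of polynomials over `K` (with points taken in a
`K`-algebra `L`) if every nonzero polynomial of `F` takes a nonzero value at some point of `H`. -/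
def IsHittingSet {K L : Type*} [CommSemiring K] [CommSemiring L] [Algebra K L]
    (H : Set L) (F : Set (Polynomial K)) : Prop :=
  ∀ f ∈ F, f ≠ 0 → ∃ θ ∈ H, Polynomial.aeval θ f ≠ 0

theorem X_pow_sub_one_dvd_of_forall_pow_eq_one {K L : Type*} [Field K] [Field L] [Algebra K L]
    [IsAlgClosed L] {n : ℕ} (hn : (n : K) ≠ 0) {f : K[X]}
    (h : ∀ z : L, z ^ n = 1 → aeval z f = 0) : X ^ n - 1 ∣ f := by
  have hn' : (n : L) ≠ 0 := by simpa using (algebraMap K L).injective.ne hn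
  have hn0 : n ≠ 0 := by rintro rfl; simp at hn
  rw [← map_dvd_map (algebraMap K L) (algebraMap K L).injective
    (by simpa using monic_X_pow_sub_C (1 : K) hn0)]
  rcases eq_or_ne f 0 with rfl | hf
  · simp
  have hsep : (X ^ n - 1 : L[X]).Separable := by
    simpa using separable_X_pow_sub_C (1 : L) hn' one_ne_zero
  simp only [Polynomial.map_sub, Polynomial.map_pow, map_X, Polynomial.map_one]
  refine (IsAlgClosed.splits _).dvd_of_roots_le_roots hsep.ne_zero
    ((Multiset.le_iff_subset (nodup_roots hsep)).2 fun z hz => ?_)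
  rw [mem_roots hsep.ne_zero, IsRoot, eval_sub, eval_pow, eval_X, eval_one, sub_eq_zero] at hz
  rw [mem_roots ((Polynomial.map_ne_zero_iff (algebraMap K L).injective).2 hf), IsRoot,
    eval_map_algebraMap]
  exact h z hz

theorem sum_coeff_filter_mod_eq_zero {R : Type*} [CommRing R] {n : ℕ} (hn : 0 < n) {f : R[X]}
    (hf : X ^ n - 1 ∣ f) (r : ℕ) :
    ∑ j ∈ f.support with j % n = r, f.coeff j = 0 := by
  nontriviality R
  set g : R[X] := ∑ j ∈ f.support, C (f.coeff j) * X ^ (j % n)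
  have hmonic : (X ^ n - 1 : R[X]).Monic := by simpa using monic_X_pow_sub_C (1 : R) hn.ne'
  have hfg : X ^ n - 1 ∣ f - g := by
    nth_rw 1 [f.as_sum_support_C_mul_X_pow]
    rw [← Finset.sum_sub_distrib]
    refine Finset.dvd_sum fun j _ => ?_
    have : C (f.coeff j) * X ^ j - C (f.coeff j) * X ^ (j % n)
        = C (f.coeff j) * X ^ (j % n) * ((X ^ n) ^ (j / n) - 1 ^ (j / n)) := by
      rw [one_pow, ← pow_mul, mul_sub, mul_one, mul_assoc, ← pow_add, Nat.mod_add_div]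
    rw [this]
    exact (sub_dvd_pow_sub_pow _ _ _).mul_left _
  have hg : g = 0 := by
    have hdeg : g.degree < (X ^ n - 1 : R[X]).degree := by
      rw [show (X ^ n - 1 : R[X]).degree = n by simpa using degree_X_pow_sub_C hn (1 : R)]
      refine (degree_sum_le _ _).trans_lt ((Finset.sup_lt_iff (WithBot.bot_lt_coe n)).2
        fun j _ => (degree_C_mul_X_pow_le _ _).trans_lt ?_)
      exact WithBot.coe_lt_coe.2 (Nat.mod_lt j hn)
    rw [← (modByMonic_eq_self_iff hmonic).2 hdeg, modByMonic_eq_zero_iff_dvd hmonic]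
    simpa using dvd_sub hf hfg
  have := congrArg (coeff · r) hg
  simp only [g, finsetSum_coeff, coeff_C_mul_X_pow, coeff_zero] at this
  rw [Finset.sum_filter]
  simpa only [@eq_comm _ r] using this

theorem exists_ne_modEq_of_X_pow_sub_one_dvd {R : Type*} [CommRing R] {n : ℕ} (hn : 0 < n)
    {f : R[X]} (hf : X ^ n - 1 ∣ f) {i : ℕ} (hi : i ∈ f.support) :
    ∃ j ∈ f.support, j ≠ i ∧ j ≡ i [MOD n] := by
  by_contra! h
  have hclass : {j ∈ f.support | j % n = i % n} = {i} :=
    Finset.eq_singleton_iff_unique_mem.2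
      ⟨Finset.mem_filter.2 ⟨hi, rfl⟩, fun j hj => by
        by_contra hji
        exact h j (Finset.mem_filter.1 hj).1 hji (Finset.mem_filter.1 hj).2⟩
  have := sum_coeff_filter_mod_eq_zero hn hf (i % n)
  rw [hclass, Finset.sum_singleton] at this
  exact mem_support_iff.1 hi this

theorem two_pow_card_le_prod_of_forall_prime_dvd {ι : Type*} {P : Finset ℕ}
    (hP : ∀ p ∈ P, p.Prime) {s : Finset ι} {a : ι → ℕ} (ha : ∀ i ∈ s, a i ≠ 0)
    (h : ∀ p ∈ P, ∃ i ∈ s, p ∣ a i) : 2 ^ P.card ≤ ∏ i ∈ s, a i :=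
  calc 2 ^ P.card = ∏ _p ∈ P, 2 := (Finset.prod_const 2).symm
    _ ≤ ∏ p ∈ P, p := Finset.prod_le_prod' fun p hp => (hP p hp).two_le
    _ ≤ ∏ i ∈ s, a i := Nat.le_of_dvd (Nat.pos_of_ne_zero (Finset.prod_ne_zero_iff.2 ha)) <|
        Finset.prod_primes_dvd _ (fun p hp => (hP p hp).prime) fun p hp =>
          let ⟨_, hi, hpi⟩ := h p hp; hpi.trans (Finset.dvd_prod_of_mem a hi)

theorem pow_le_two_pow_of_mul_logb_le {d m k : ℕ} (hd : d ≠ 0)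
    (h : m * Real.logb 2 d ≤ k) : d ^ m ≤ 2 ^ k := by
  have : Real.logb 2 ((d : ℝ) ^ m) ≤ k := by rwa [Real.logb_pow]
  rw [Real.logb_le_iff_le_rpow one_lt_two (by positivity), Real.rpow_natCast] at this
  exact_mod_cast this

theorem stmt4_general (K : Type*) [Field K] [CharZero K] (d m : ℕ) (hd : 2 ≤ d)
    (Ps : Finset ℕ) (hP : ∀ p ∈ Ps, p.Prime)
    (hcard : m * Real.logb 2 d ≤ Ps.card) :
    IsHittingSet {θ : AlgebraicClosure K | ∃ p ∈ Ps, θ ^ p = 1}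
      {f : K[X] | f.natDegree ≤ d ∧ f.support.card ≤ m} := by
  rintro f ⟨hfd, hfm⟩ hf0
  by_contra! hvanish
  set e := f.natDegree
  have he : e ∈ f.support := natDegree_mem_support_of_nonzero hf0
  have hgap : ∀ p ∈ Ps, ∃ j ∈ f.support.erase e, p ∣ e - j := by
    intro p hp
    have hdvd : X ^ p - 1 ∣ f :=
      X_pow_sub_one_dvd_of_forall_pow_eq_one (L := AlgebraicClosure K)
        (Nat.cast_ne_zero.2 (hP p hp).ne_zero) fun z hz => hvanish z ⟨p, hp, hz⟩
    obtain ⟨j, hj, hje, hmod⟩ := exists_ne_modEq_of_X_pow_sub_one_dvd (hP p hp).pos hdvd he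
    exact ⟨j, Finset.mem_erase.2 ⟨hje, hj⟩,
      (Nat.modEq_iff_dvd' (le_natDegree_of_mem_supp j hj)).1 hmod⟩
  have hgap_ne_zero : ∀ j ∈ f.support.erase e, e - j ≠ 0 := fun j hj => by
    have := le_natDegree_of_mem_supp j (Finset.mem_of_mem_erase hj)
    have := Finset.ne_of_mem_erase hj
    omega
  have : d ^ m < d ^ m :=
    calc d ^ m ≤ 2 ^ Ps.card := pow_le_two_pow_of_mul_logb_le (by omega) hcard
      _ ≤ ∏ j ∈ f.support.erase e, (e - j) :=
        two_pow_card_le_prod_of_forall_prime_dvd hP hgap_ne_zero hgap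
      _ ≤ d ^ (f.support.erase e).card := Finset.prod_le_pow_card _ _ _ fun j _ => by omega
      _ < d ^ m := Nat.pow_lt_pow_right hd ((Finset.card_erase_lt_of_mem he).trans_le hfm)
  exact lt_irrefl _ this

/-- Let `K` be a field of characteristic 0, `d ≥ 2`, `m ≥ 1`, and `Ps` a set of at least
`m · log₂ d` prime numbers. Then the set of all `p`-th roots of unity (in an algebraic closure
of `K`), for all `p ∈ Ps`, is a hitting set for the set of all polynomials `f ∈ K[X]` of degree
at most `d` with at most `m` nonzero monomials. -/
theorem stmt4 (K : Type*) [Field K] [CharZero K] (d m : ℕ) (hd : 2 ≤ d) (hm : 1 ≤ m)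
    (Ps : Finset ℕ) (hP : ∀ p ∈ Ps, p.Prime)
    (hcard : m * Real.logb 2 d ≤ Ps.card) :
    IsHittingSet {θ : AlgebraicClosure K | ∃ p ∈ Ps, θ ^ p = 1}
      {f : K[X] | f.natDegree ≤ d ∧ f.support.card ≤ m} :=
  stmt4_general K d m hd Ps hP hcard
end

section
/- Let p ∈ \overline{ℚ}[X] be a polynomial with at most t+1 nonzero terms (t ≥ 1). Assume p = q + r where every monomial of q has degree at most β and every monomial of r has degree at least γ. Let x be a nonzero algebraic number that is a root of p and is not a root of unity. If γ − β > log(t · H(p)) / log H(x), then q(x) = 0 and r(x) = 0. -/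
/-!
Suppose `y = q(x) ≠ 0`; then also `y = -r(x)`. At a place `v` of `K`, expand `y` through `q` when
`|x|_v ≥ 1` and through `r` when `|x|_v ≤ 1`: this gives
`|y|_v ≤ c_v |p|_v max(1, |x|_v)^β min(1, |x|_v)^γ`, with `c_v = t` at the archimedean places
and `c_v = 1` at the finite ones. Multiplying over all places and using the product formula for
`y` and for `x` yields `H(x)^(γ - β) ≤ t H(p)`, which contradicts the gap since `H(x) > 1` by
Kronecker's theorem. At the finite places the estimate is an inclusion of fractional ideals, and
the product formula becomes the multiplicativity of the absolute norm.
-/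

open Polynomial NumberField

/-- The absolute projective (Weil) height of a tuple `c` of elements of a number field `K`:
`H(c) = (∏_{ν ∈ M_K} (max_j |c_j|_ν)^{d_ν})^{1/[K:ℚ]}`.
The contribution of the archimedean places is `∏_{σ : K →+* ℂ} max_j |σ(c_j)|` (each complex
place being counted with its local degree), and the contribution of all the finite places is the
inverse of the absolute norm of the fractional ideal generated by the `c_j`. -/
noncomputable def projHeight (K : Type*) [Field K] [NumberField K] {ι : Type*} [Fintype ι]
    (c : ι → K) : ℝ :=
  ((∏ σ : K →+* ℂ, ⨆ j, ‖σ (c j)‖) /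
      |(FractionalIdeal.absNorm
          (FractionalIdeal.spanFinset (𝓞 K) Finset.univ c) : ℚ)|) ^
    ((Module.finrank ℚ K : ℝ)⁻¹)

/-- The absolute Weil height of an element `x` of a number field `K`:
`H(x) = ∏_{ν ∈ M_K} max(1, |x|_ν)^{d_ν/[K:ℚ]}`, i.e. the projective height of `(1, x)`. -/
noncomputable def elemHeight (K : Type*) [Field K] [NumberField K] (x : K) : ℝ :=
  projHeight K ![1, x]

/-- The height of a polynomial with algebraic coefficients, not all zero, is the projective
height of its coefficient tuple. -/
noncomputable def polyHeight (K : Type*) [Field K] [NumberField K] (f : K[X]) : ℝ :=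
  projHeight K fun j : Fin (f.natDegree + 1) => f.coeff j

open scoped Finset
open FractionalIdeal nonZeroDivisors

namespace Polynomial

variable {R : Type*} [Semiring R] {q r : R[X]}

lemma disjoint_support_of_lt {β γ : ℕ} (hβγ : β < γ) (hq : ∀ i ∈ q.support, i ≤ β)
    (hr : ∀ i ∈ r.support, γ ≤ i) : Disjoint q.support r.support :=
  Finset.disjoint_left.mpr fun i hiq hir => by have := hq i hiq; have := hr i hir; omega

lemma coeff_eq_zero_or_eq_coeff_add (h : Disjoint q.support r.support) (i : ℕ) :
    q.coeff i = 0 ∨ q.coeff i = (q + r).coeff i := by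
  by_cases hi : i ∈ q.support
  · right
    rw [coeff_add, notMem_support_iff.mp (Finset.disjoint_left.mp h hi), add_zero]
  · exact Or.inl (notMem_support_iff.mp hi)

lemma support_add_of_disjoint (h : Disjoint q.support r.support) :
    (q + r).support = q.support ∪ r.support := by
  refine Finset.Subset.antisymm support_add fun i hi => ?_
  rcases Finset.mem_union.mp hi with hi | hi
  · rwa [mem_support_iff, coeff_add, notMem_support_iff.mp (Finset.disjoint_left.mp h hi),
      add_zero, ← mem_support_iff]
  · rwa [mem_support_iff, coeff_add, notMem_support_iff.mp (Finset.disjoint_right.mp h hi),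
      zero_add, ← mem_support_iff]

lemma card_support_le_of_disjoint {t : ℕ} (h : Disjoint q.support r.support)
    (ht : #(q + r).support ≤ t + 1) (hr : r ≠ 0) : #q.support ≤ t := by
  rw [support_add_of_disjoint h, Finset.card_union_of_disjoint h] at ht
  have := Finset.card_pos.mpr (support_nonempty.mpr hr)
  omega

variable {𝕜 : Type*} [NormedField 𝕜] (φ : R →+* 𝕜)

lemma norm_eval₂_le_card_mul {f : R[X]} {a : 𝕜} {B : ℝ}
    (h : ∀ i ∈ f.support, ‖φ (f.coeff i)‖ * ‖a‖ ^ i ≤ B) : ‖f.eval₂ φ a‖ ≤ #f.support * B := by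
  rw [eval₂_eq_sum, Polynomial.sum_def, ← nsmul_eq_mul]
  refine (norm_sum_le _ _).trans (Finset.sum_le_card_nsmul _ _ _ fun i hi => ?_)
  simpa only [norm_mul, norm_pow] using h i hi

/-- The archimedean estimate: `q` controls `|a| ≥ 1`, and `r = -q` at `a` controls `|a| ≤ 1`. -/
lemma norm_eval₂_le_of_eval₂_add_eq_zero {a : 𝕜} {t β γ : ℕ} {M : ℝ}
    (hq : ∀ i ∈ q.support, i ≤ β) (hr : ∀ i ∈ r.support, γ ≤ i)
    (hqt : #q.support ≤ t) (hrt : #r.support ≤ t)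
    (hqM : ∀ i, ‖φ (q.coeff i)‖ ≤ M) (hrM : ∀ i, ‖φ (r.coeff i)‖ ≤ M)
    (h : q.eval₂ φ a + r.eval₂ φ a = 0) :
    ‖q.eval₂ φ a‖ ≤ t * M * (max 1 ‖a‖ ^ β * min 1 ‖a‖ ^ γ) := by
  have hM : 0 ≤ M := (norm_nonneg _).trans (hqM 0)
  rcases le_total ‖a‖ 1 with ha | ha
  · rw [max_eq_left ha, min_eq_right ha, one_pow, one_mul, eq_neg_of_add_eq_zero_left h, norm_neg]
    calc ‖r.eval₂ φ a‖ ≤ #r.support * (M * ‖a‖ ^ γ) := norm_eval₂_le_card_mul φ fun i hi =>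
          mul_le_mul (hrM i) (pow_le_pow_of_le_one (norm_nonneg _) ha (hr i hi)) (by positivity) hM
      _ ≤ t * (M * ‖a‖ ^ γ) := by gcongr
      _ = t * M * ‖a‖ ^ γ := by ring
  · rw [max_eq_right ha, min_eq_left ha, one_pow, mul_one]
    calc ‖q.eval₂ φ a‖ ≤ #q.support * (M * ‖a‖ ^ β) := norm_eval₂_le_card_mul φ fun i hi =>
          mul_le_mul (hqM i) (pow_le_pow_right₀ ha (hq i hi)) (by positivity) hM
      _ ≤ t * (M * ‖a‖ ^ β) := by gcongr
      _ = t * M * ‖a‖ ^ β := by ring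

end Polynomial

section zpowSpan

variable (R : Type*) {K : Type*} [CommRing R] [Field K] [Algebra R K]

def zpowSpan (x : K) (a b : ℤ) : Submodule R K :=
  Submodule.span R ((x ^ ·) '' Set.Icc a b)

variable {R} {x : K} {a b a' b' j : ℤ}

lemma zpow_mem_zpowSpan (h : j ∈ Set.Icc a b) : x ^ j ∈ zpowSpan R x a b :=
  Submodule.subset_span ⟨j, h, rfl⟩

lemma zpowSpan_mono (ha : a' ≤ a) (hb : b ≤ b') : zpowSpan R x a b ≤ zpowSpan R x a' b' :=
  Submodule.span_mono (Set.image_mono (Set.Icc_subset_Icc ha hb))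

lemma zpowSpan_mul_le (hx : x ≠ 0) (a b a' b' : ℤ) :
    zpowSpan R x a b * zpowSpan R x a' b' ≤ zpowSpan R x (a + a') (b + b') := by
  rw [zpowSpan, zpowSpan, Submodule.span_mul_span, Submodule.span_le]
  rintro _ ⟨_, ⟨i, hi, rfl⟩, _, ⟨k, hk, rfl⟩, rfl⟩
  simp only [SetLike.mem_coe, ← zpow_add₀ hx]
  exact zpow_mem_zpowSpan ⟨add_le_add hi.1 hk.1, add_le_add hi.2 hk.2⟩

lemma mul_zpow_mem_zpowSpan (hx : x ≠ 0) {z : K} (hz : z ∈ zpowSpan R x a b) (j : ℤ) :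
    z * x ^ j ∈ zpowSpan R x (a + j) (b + j) :=
  zpowSpan_mul_le hx a b j j (Submodule.mul_mem_mul hz (zpow_mem_zpowSpan ⟨le_rfl, le_rfl⟩))

lemma span_range_pair_pow_le_zpowSpan (hx : x ≠ 0) (n : ℕ) :
    Submodule.span R (Set.range ![1, x]) ^ n ≤ zpowSpan R x 0 n := by
  induction n with
  | zero =>
    rw [pow_zero, Submodule.one_eq_span, Submodule.span_le, Set.singleton_subset_iff]
    simpa using zpow_mem_zpowSpan (R := R) (x := x) (a := 0) (b := 0) ⟨le_rfl, le_rfl⟩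
  | succ n ih =>
    have hpair : Submodule.span R (Set.range ![1, x]) ≤ zpowSpan R x 0 1 := by
      refine Submodule.span_le.mpr (Set.range_subset_iff.mpr (Fin.forall_fin_two.mpr ⟨?_, ?_⟩))
      · simpa using zpow_mem_zpowSpan (R := R) (x := x) (b := 1) (j := 0) ⟨le_rfl, zero_le_one⟩
      · simpa using zpow_mem_zpowSpan (R := R) (x := x) (a := 0) (j := 1) ⟨zero_le_one, le_rfl⟩
    calc Submodule.span R (Set.range ![1, x]) ^ (n + 1)
        ≤ zpowSpan R x 0 n * zpowSpan R x 0 1 := by rw [pow_succ]; exact mul_le_mul' ih hpair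
      _ ≤ zpowSpan R x (0 + 0) (n + 1) := zpowSpan_mul_le hx _ _ _ _
      _ = zpowSpan R x 0 ((n + 1 : ℕ) : ℤ) := by push_cast; rfl

lemma zpowSpan_inf_le_one [IsFractionRing R K] [IsIntegrallyClosed R] (hx : x ≠ 0) (c d : ℕ) :
    zpowSpan R x (-c) 0 ⊓ zpowSpan R x 0 d ≤ 1 := by
  rintro z ⟨hneg, hpos⟩
  rw [Submodule.mem_one, ← IsIntegrallyClosed.isIntegral_iff]
  -- `z` stabilises the finitely generated module spanned by `x ^ j`, `-c ≤ j ≤ d`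
  refine isIntegral_of_smul_mem_submodule (zpowSpan R x (-c) d) ?_ ?_ z fun n hn => ?_
  · refine (Submodule.ne_bot_iff _).mpr ⟨1, ?_, one_ne_zero⟩
    simpa using zpow_mem_zpowSpan (R := R) (x := x) (j := 0) ⟨by omega, by omega⟩
  · exact Submodule.fg_span ((Set.finite_Icc _ _).image _)
  induction hn using Submodule.span_induction with
  | mem _ h =>
    obtain ⟨j, ⟨hj₁, hj₂⟩, rfl⟩ := h
    rw [smul_eq_mul]
    rcases le_or_gt 0 j with h0 | h0
    · refine zpowSpan_mono ?_ ?_ (mul_zpow_mem_zpowSpan hx hneg j) <;> omega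
    · refine zpowSpan_mono ?_ ?_ (mul_zpow_mem_zpowSpan hx hpos j) <;> omega
  | zero => simp
  | add _ _ _ _ h₁ h₂ => rw [smul_add]; exact add_mem h₁ h₂
  | smul r n _ h => rw [smul_comm]; exact Submodule.smul_mem _ r h

lemma Polynomial.eval_mul_zpow_neg_mem_mul {f : K[X]} {M N : Submodule R K} (hx : x ≠ 0)
    (s : ℤ) (hM : ∀ i, f.coeff i ∈ M) (hN : ∀ i ∈ f.support, x ^ ((i : ℤ) - s) ∈ N) :
    f.eval x * x ^ (-s) ∈ M * N := by
  rw [eval_eq_sum, Polynomial.sum_def, Finset.sum_mul]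
  refine Submodule.sum_mem _ fun i hi => ?_
  rw [mul_assoc, ← zpow_natCast, ← zpow_add₀ hx, ← sub_eq_add_neg]
  exact Submodule.mul_mem_mul (hM i) (hN i hi)

end zpowSpan

namespace FractionalIdeal

variable {R K : Type*} [CommRing R] [Field K] [Algebra R K] [IsFractionRing R K]

lemma mem_spanFinset_univ {ι : Type*} [Fintype ι] (c : ι → K) (j : ι) :
    c j ∈ spanFinset R Finset.univ c :=
  Submodule.subset_span ⟨j, Finset.mem_coe.mpr (Finset.mem_univ j), rfl⟩

lemma spanFinset_one_x_ne_zero (x : K) : spanFinset R Finset.univ ![1, x] ≠ 0 :=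
  spanFinset_ne_zero.mpr ⟨0, Finset.mem_univ _, by simp⟩

lemma coeff_mem_spanFinset_coeff {f p : K[X]} (hf : ∀ i, f.coeff i = 0 ∨ f.coeff i = p.coeff i)
    (i : ℕ) : f.coeff i ∈ spanFinset R Finset.univ fun j : Fin (p.natDegree + 1) => p.coeff j := by
  rcases hf i with hi | hi
  · rw [hi]
    exact zero_mem _
  by_cases hle : i ≤ p.natDegree
  · exact hi ▸ mem_spanFinset_univ (fun j : Fin (p.natDegree + 1) => p.coeff j) ⟨i, by omega⟩
  · rw [hi, coeff_eq_zero_of_natDegree_lt (by omega)]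
    exact zero_mem _

variable [IsDedekindDomain R]

lemma mem_of_mem_mul_of_mem_mul {C : FractionalIdeal R⁰ K} (hC : C ≠ 0)
    {T₁ T₂ : Submodule R K} (hT : T₁ ⊓ T₂ ≤ 1) {z : K}
    (h₁ : z ∈ (C : Submodule R K) * T₁) (h₂ : z ∈ (C : Submodule R K) * T₂) : z ∈ C := by
  have hinv {T : Submodule R K} (hz : z ∈ (C : Submodule R K) * T) :
      ∀ u ∈ C⁻¹, z * u ∈ T := fun u hu => by
    have := Submodule.mul_mem_mul hu hz
    rwa [← mul_assoc, ← coe_mul, inv_mul_cancel₀ hC, coe_one, one_mul, mul_comm] at this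
  have hle : spanSingleton R⁰ z * C⁻¹ ≤ 1 :=
    spanSingleton_mul_le_iff.mpr fun u hu => by
      rw [← mem_coe, coe_one]
      exact hT ⟨hinv h₁ u hu, hinv h₂ u hu⟩
  have := mul_le_mul_left hle C
  rwa [mul_assoc, inv_mul_cancel₀ hC, mul_one, one_mul, spanSingleton_le_iff_mem] at this

lemma exists_eq_mul_coeIdeal_of_le {I J : FractionalIdeal R⁰ K} (hJ : J ≠ 0) (h : I ≤ J) :
    ∃ I₀ : Ideal R, I = J * I₀ := by
  have : J⁻¹ * I ≤ 1 := by simpa [inv_mul_cancel₀ hJ] using mul_le_mul_right h J⁻¹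
  obtain ⟨I₀, hI₀⟩ := le_one_iff_exists_coeIdeal.mp this
  exact ⟨I₀, by rw [hI₀, ← mul_assoc, mul_inv_cancel₀ hJ, one_mul]⟩

section Gap

variable {C : FractionalIdeal R⁰ K} {q r : K[X]} {x : K} {β γ : ℕ}

lemma eval_mul_zpow_neg_mem (hC : C ≠ 0) (hx : x ≠ 0) (hq : ∀ i ∈ q.support, i ≤ β)
    (hr : ∀ i ∈ r.support, γ ≤ i) (hqC : ∀ i, q.coeff i ∈ C) (hrC : ∀ i, r.coeff i ∈ C)
    (h : q.eval x + r.eval x = 0) {s : ℤ} (hβs : β ≤ s) (hsγ : s ≤ γ) :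
    q.eval x * x ^ (-s) ∈ C := by
  -- expanding `q` puts `q(x) / x ^ s` in `C · R[1/x]`, expanding `-r` puts it in `C · R[x]`
  refine mem_of_mem_mul_of_mem_mul hC (zpowSpan_inf_le_one hx γ r.natDegree) ?_ ?_
  · refine eval_mul_zpow_neg_mem_mul hx s hqC fun i hi => zpow_mem_zpowSpan ⟨?_, ?_⟩
    all_goals have := hq i hi; omega
  · rw [eq_neg_of_add_eq_zero_left h, neg_mul]
    refine neg_mem (eval_mul_zpow_neg_mem_mul hx s hrC fun i hi => zpow_mem_zpowSpan ⟨?_, ?_⟩)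
    · have := hr i hi; omega
    · have := le_natDegree_of_mem_supp i hi; omega

/-- The nonarchimedean estimate `|q(x)|_v ≤ |C|_v max(1, |x|_v)^β min(1, |x|_v)^γ` at all primes
at once. -/
lemma spanSingleton_eval_mul_pow_le (hC : C ≠ 0) (hx : x ≠ 0) (hβγ : β ≤ γ)
    (hq : ∀ i ∈ q.support, i ≤ β) (hr : ∀ i ∈ r.support, γ ≤ i) (hqC : ∀ i, q.coeff i ∈ C)
    (hrC : ∀ i, r.coeff i ∈ C) (h : q.eval x + r.eval x = 0) :
    spanSingleton R⁰ (q.eval x) * spanFinset R Finset.univ ![1, x] ^ (γ - β) ≤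
      spanSingleton R⁰ (x ^ γ) * C := by
  have hspan : zpowSpan R x 0 (γ - β : ℕ) ≤
      (C : Submodule R K).comap (LinearMap.mulLeft R (q.eval x * x ^ (-(γ : ℤ)))) := by
    refine Submodule.span_le.mpr ?_
    rintro _ ⟨k, ⟨hk₀, hk⟩, rfl⟩
    have := eval_mul_zpow_neg_mem hC hx hq hr hqC hrC h (s := γ - k) (by omega) (by omega)
    rwa [neg_sub, sub_eq_neg_add, zpow_add₀ hx, ← mul_assoc] at this
  refine spanSingleton_mul_le_iff.mpr fun z hz => ?_
  have hz' : z ∈ zpowSpan R x 0 (γ - β : ℕ) := by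
    refine span_range_pair_pow_le_zpowSpan hx _ ?_
    rwa [← mem_coe, coe_pow, spanFinset_coe, Finset.coe_univ, Set.image_univ] at hz
  refine mem_singleton_mul.mpr ⟨_, hspan hz', ?_⟩
  simp only [LinearMap.mulLeft_apply, zpow_neg, zpow_natCast]
  field_simp

end Gap

variable [Module.Free ℤ R] [Module.Finite ℤ R]

lemma absNorm_pos {I : FractionalIdeal R⁰ K} (hI : I ≠ 0) : 0 < absNorm I :=
  (absNorm_nonneg I).lt_of_ne' (absNorm_eq_zero_iff.not.mpr hI)

lemma absNorm_le_absNorm_of_le {I J : FractionalIdeal R⁰ K} (hI : I ≠ 0) (h : I ≤ J) :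
    absNorm J ≤ absNorm I := by
  have hJ : J ≠ 0 := by rintro rfl; exact hI (le_bot_iff.mp h)
  obtain ⟨I₀, rfl⟩ := exists_eq_mul_coeIdeal_of_le hJ h
  have hI₀ : I₀ ≠ ⊥ := by rintro rfl; simp at hI
  rw [map_mul, coeIdeal_absNorm]
  refine le_mul_of_one_le_right (absNorm_nonneg J) ?_
  exact_mod_cast Nat.one_le_iff_ne_zero.mpr (Ideal.absNorm_eq_zero_iff.not.mpr hI₀)

lemma eq_of_le_of_absNorm_eq {I J : FractionalIdeal R⁰ K} (hJ : J ≠ 0) (h : I ≤ J)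
    (hN : absNorm I = absNorm J) : I = J := by
  obtain ⟨I₀, rfl⟩ := exists_eq_mul_coeIdeal_of_le hJ h
  rw [map_mul, coeIdeal_absNorm] at hN
  have : Ideal.absNorm I₀ = 1 := by
    exact_mod_cast (mul_eq_left₀ (absNorm_eq_zero_iff.not.mpr hJ)).mp hN
  rw [Ideal.absNorm_eq_one_iff.mp this, coeIdeal_top, mul_one]

end FractionalIdeal

section NumberField

variable {K : Type*} [Field K]

lemma iSup_norm_one_x (σ : K →+* ℂ) (x : K) : ⨆ j, ‖σ (![1, x] j)‖ = max 1 ‖σ x‖ :=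
  eq_of_forall_ge_iff fun b => by simp [ciSup_le_iff, Fin.forall_fin_two]

lemma norm_coeff_le_iSup {f p : K[X]} (hf : ∀ i, f.coeff i = 0 ∨ f.coeff i = p.coeff i)
    (σ : K →+* ℂ) (i : ℕ) : ‖σ (f.coeff i)‖ ≤ ⨆ j : Fin (p.natDegree + 1), ‖σ (p.coeff j)‖ := by
  have hle : ‖σ (f.coeff i)‖ ≤ ‖σ (p.coeff i)‖ := by
    rcases hf i with hi | hi <;> simp [hi]
  by_cases hi : i ≤ p.natDegree
  · exact hle.trans
      (Finite.le_ciSup (fun j : Fin (p.natDegree + 1) => ‖σ (p.coeff j)‖) ⟨i, by omega⟩)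
  · rw [coeff_eq_zero_of_natDegree_lt (p := p) (by omega), map_zero, norm_zero] at hle
    exact hle.trans (Finite.le_ciSup_of_le (f := fun j : Fin (p.natDegree + 1) => ‖σ (p.coeff j)‖)
      0 (norm_nonneg _))

variable [NumberField K]

lemma prod_norm_embeddings_eq_absNorm (y : K) :
    ∏ σ : K →+* ℂ, ‖σ y‖ = ((absNorm (spanSingleton (𝓞 K)⁰ y) : ℚ) : ℝ) := by
  rw [absNorm_span_singleton, Rat.cast_abs, ← Complex.norm_ratCast, ← eq_ratCast (algebraMap ℚ ℂ),
    Algebra.norm_eq_prod_embeddings, norm_prod]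
  exact Fintype.prod_equiv (RingHom.equivRatAlgHom K ℂ) _ _ fun σ => rfl

variable (K) in
/-- The relative height `H_K(c) = H(c) ^ [K : ℚ]`. -/
noncomputable def relProjHeight {ι : Type*} [Fintype ι] (c : ι → K) : ℝ :=
  (∏ σ : K →+* ℂ, ⨆ j, ‖σ (c j)‖) / (absNorm (spanFinset (𝓞 K) Finset.univ c) : ℚ)

lemma projHeight_eq_rpow {ι : Type*} [Fintype ι] (c : ι → K) :
    projHeight K c = relProjHeight K c ^ ((Module.finrank ℚ K : ℝ)⁻¹) := by
  rw [projHeight, relProjHeight, abs_of_nonneg (absNorm_nonneg _)]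

lemma relProjHeight_nonneg {ι : Type*} [Fintype ι] (c : ι → K) : 0 ≤ relProjHeight K c :=
  div_nonneg (Finset.prod_nonneg fun σ _ => Real.iSup_nonneg fun j => norm_nonneg _)
    (by exact_mod_cast absNorm_nonneg _)

lemma one_le_relProjHeight {ι : Type*} [Fintype ι] {c : ι → K} {j : ι} (hj : c j ≠ 0) :
    1 ≤ relProjHeight K c := by
  have hC : spanFinset (𝓞 K) Finset.univ c ≠ 0 :=
    spanFinset_ne_zero.mpr ⟨j, Finset.mem_univ j, hj⟩
  have hN : (0 : ℝ) < (absNorm (spanFinset (𝓞 K) Finset.univ c) : ℚ) := by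
    exact_mod_cast absNorm_pos hC
  rw [relProjHeight, one_le_div hN]
  calc ((absNorm (spanFinset (𝓞 K) Finset.univ c) : ℚ) : ℝ)
      ≤ (absNorm (spanSingleton (𝓞 K)⁰ (c j)) : ℚ) := by
        exact_mod_cast absNorm_le_absNorm_of_le (spanSingleton_ne_zero_iff.mpr hj)
          (spanSingleton_le_iff_mem.mpr (mem_spanFinset_univ c j))
    _ = ∏ σ : K →+* ℂ, ‖σ (c j)‖ := (prod_norm_embeddings_eq_absNorm _).symm
    _ ≤ ∏ σ : K →+* ℂ, ⨆ i, ‖σ (c i)‖ := Finset.prod_le_prod (fun σ _ => norm_nonneg _)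
        fun σ _ => Finite.le_ciSup (fun i => ‖σ (c i)‖) j

lemma one_lt_relProjHeight_one_x {x : K} (hx0 : x ≠ 0) (hxru : ∀ n : ℕ, 0 < n → x ^ n ≠ 1) :
    1 < relProjHeight K ![1, x] := by
  set A := spanFinset (𝓞 K) Finset.univ ![1, x]
  have h1A : 1 ≤ A := one_le.mpr (by simpa using mem_spanFinset_univ ![1, x] 0)
  have hA : A ≠ 0 := spanFinset_one_x_ne_zero x
  have hNA : absNorm A ≤ 1 := by
    simpa using absNorm_le_absNorm_of_le (one_ne_zero' (FractionalIdeal (𝓞 K)⁰ K)) h1A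
  have hNA0 : (0 : ℝ) < (absNorm A : ℚ) := by exact_mod_cast absNorm_pos hA
  have hP : 1 ≤ ∏ σ : K →+* ℂ, max 1 ‖σ x‖ := Finset.one_le_prod fun σ _ => le_max_left _ _
  simp only [relProjHeight, iSup_norm_one_x]
  rw [one_lt_div hNA0]
  by_contra! hle
  have hP1 : ∏ σ : K →+* ℂ, max 1 ‖σ x‖ = 1 := le_antisymm (hle.trans (by exact_mod_cast hNA)) hP
  have hNA1 : absNorm A = 1 := le_antisymm hNA (by exact_mod_cast hP.trans hle)
  have hAeq : 1 = A := eq_of_le_of_absNorm_eq hA h1A (by rw [absNorm_one, hNA1])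
  have hint : IsIntegral ℤ x := by
    have hxA : x ∈ A := by simpa using mem_spanFinset_univ ![1, x] 1
    obtain ⟨x', rfl⟩ := (mem_one_iff _).mp (hAeq ▸ hxA)
    exact RingOfIntegers.isIntegral_coe x'
  have hσ (σ : K →+* ℂ) : ‖σ x‖ ≤ 1 := by
    classical
    calc ‖σ x‖ ≤ max 1 ‖σ x‖ := le_max_right _ _
        _ ≤ max 1 ‖σ x‖ * ∏ τ ∈ Finset.univ.erase σ, max 1 ‖τ x‖ :=
          le_mul_of_one_le_right (by positivity) (Finset.one_le_prod fun _ _ => le_max_left _ _)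
        _ = 1 := by rw [Finset.mul_prod_erase _ (fun τ => max 1 ‖τ x‖) (Finset.mem_univ σ), hP1]
  obtain ⟨n, hn, hxn⟩ := Embeddings.pow_eq_one_of_norm_le_one K ℂ hx0 hint hσ
  exact hxru n hn hxn

lemma prod_norm_eval_le {q r : K[X]} {x : K} {t β γ : ℕ} {M : (K →+* ℂ) → ℝ}
    (hq : ∀ i ∈ q.support, i ≤ β) (hr : ∀ i ∈ r.support, γ ≤ i)
    (hqt : #q.support ≤ t) (hrt : #r.support ≤ t)
    (hqM : ∀ σ i, ‖σ (q.coeff i)‖ ≤ M σ) (hrM : ∀ σ i, ‖σ (r.coeff i)‖ ≤ M σ)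
    (h : q.eval x + r.eval x = 0) :
    ∏ σ : K →+* ℂ, ‖σ (q.eval x)‖ ≤ t ^ Module.finrank ℚ K * (∏ σ, M σ) *
      ((∏ σ : K →+* ℂ, max 1 ‖σ x‖) ^ β * (∏ σ : K →+* ℂ, min 1 ‖σ x‖) ^ γ) :=
  calc ∏ σ : K →+* ℂ, ‖σ (q.eval x)‖
      ≤ ∏ σ : K →+* ℂ, (t * M σ * (max 1 ‖σ x‖ ^ β * min 1 ‖σ x‖ ^ γ)) :=
        Finset.prod_le_prod (fun σ _ => norm_nonneg _) fun σ _ => by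
          rw [← eval₂_at_apply]
          refine norm_eval₂_le_of_eval₂_add_eq_zero σ hq hr hqt hrt (hqM σ) (hrM σ) ?_
          rw [eval₂_at_apply, eval₂_at_apply, ← map_add, h, map_zero]
    _ = _ := by
        rw [Finset.prod_mul_distrib, Finset.prod_mul_distrib, Finset.prod_mul_distrib,
          Finset.prod_const, Finset.card_univ, Embeddings.card, Finset.prod_pow, Finset.prod_pow]

lemma prod_norm_pow_mul_absNorm_le {C : FractionalIdeal (𝓞 K)⁰ K} (hC : C ≠ 0) {q r : K[X]}
    {x : K} (hx : x ≠ 0) {β γ : ℕ} (hβγ : β ≤ γ) (hq : ∀ i ∈ q.support, i ≤ β)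
    (hr : ∀ i ∈ r.support, γ ≤ i) (hqC : ∀ i, q.coeff i ∈ C) (hrC : ∀ i, r.coeff i ∈ C)
    (h : q.eval x + r.eval x = 0) (hy : q.eval x ≠ 0) :
    (∏ σ : K →+* ℂ, ‖σ x‖) ^ γ * (absNorm C : ℚ) ≤ (∏ σ : K →+* ℂ, ‖σ (q.eval x)‖) *
      (absNorm (spanFinset (𝓞 K) Finset.univ ![1, x]) : ℚ) ^ (γ - β) := by
  have := absNorm_le_absNorm_of_le (mul_ne_zero (spanSingleton_ne_zero_iff.mpr hy)
    (pow_ne_zero _ (spanFinset_one_x_ne_zero (R := 𝓞 K) x)))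
    (spanSingleton_eval_mul_pow_le hC hx hβγ hq hr hqC hrC h)
  rw [← spanSingleton_pow, map_mul, map_mul, map_pow, map_pow] at this
  simp only [prod_norm_embeddings_eq_absNorm]
  exact_mod_cast this

lemma relProjHeight_pow_le_of_prod_norm_le {ι : Type*} [Fintype ι] {c : ι → K}
    (hc : spanFinset (𝓞 K) Finset.univ c ≠ 0) {x y : K} (hx : x ≠ 0) {T : ℝ} {β γ : ℕ}
    (hβγ : β ≤ γ)
    (harch : ∏ σ : K →+* ℂ, ‖σ y‖ ≤ T * (∏ σ : K →+* ℂ, ⨆ j, ‖σ (c j)‖) *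
      ((∏ σ : K →+* ℂ, max 1 ‖σ x‖) ^ β * (∏ σ : K →+* ℂ, min 1 ‖σ x‖) ^ γ))
    (hfin : (∏ σ : K →+* ℂ, ‖σ x‖) ^ γ * (absNorm (spanFinset (𝓞 K) Finset.univ c) : ℚ) ≤
      (∏ σ : K →+* ℂ, ‖σ y‖) * (absNorm (spanFinset (𝓞 K) Finset.univ ![1, x]) : ℚ) ^ (γ - β)) :
    relProjHeight K ![1, x] ^ (γ - β) ≤ T * relProjHeight K c := by
  have hNA : (0 : ℝ) < (absNorm (spanFinset (𝓞 K) Finset.univ ![1, x]) : ℚ) := by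
    exact_mod_cast absNorm_pos (spanFinset_one_x_ne_zero (R := 𝓞 K) x)
  have hNC : (0 : ℝ) < (absNorm (spanFinset (𝓞 K) Finset.univ c) : ℚ) := by
    exact_mod_cast absNorm_pos hc
  obtain ⟨m, rfl⟩ := Nat.exists_eq_add_of_le hβγ
  rw [Nat.add_sub_cancel_left] at hfin ⊢
  simp only [relProjHeight, iSup_norm_one_x]
  set PA := ∏ σ : K →+* ℂ, max 1 ‖σ x‖
  set Pm := ∏ σ : K →+* ℂ, min 1 ‖σ x‖
  set NA : ℝ := ((absNorm (spanFinset (𝓞 K) Finset.univ ![1, x]) : ℚ) : ℝ)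
  set NC : ℝ := ((absNorm (spanFinset (𝓞 K) Finset.univ c) : ℚ) : ℝ)
  have hPx : ∏ σ : K →+* ℂ, ‖σ x‖ = PA * Pm := by
    simp only [PA, Pm, ← Finset.prod_mul_distrib, max_mul_min, one_mul]
  have hPA : 0 < PA := Finset.prod_pos fun σ _ => lt_max_of_lt_left one_pos
  have hPm : 0 < Pm :=
    Finset.prod_pos fun σ _ => lt_min one_pos (norm_pos_iff.mpr ((map_ne_zero σ).mpr hx))
  have key : PA ^ m * NC * (PA ^ β * Pm ^ (β + m)) ≤
      T * (∏ σ : K →+* ℂ, ⨆ j, ‖σ (c j)‖) * NA ^ m * (PA ^ β * Pm ^ (β + m)) :=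
    calc _ = (PA * Pm) ^ (β + m) * NC := by ring
      _ ≤ (∏ σ : K →+* ℂ, ‖σ y‖) * NA ^ m := hPx ▸ hfin
      _ ≤ _ := mul_le_mul_of_nonneg_right harch (by positivity)
      _ = _ := by ring
  rw [div_pow, ← mul_div_assoc, div_le_div_iff₀ (by positivity) hNC]
  exact le_of_mul_le_mul_right key (by positivity)

theorem relProjHeight_pow_le {t β γ : ℕ} {p q r : K[X]} (hpqr : p = q + r)
    (hterms : #p.support ≤ t + 1) (hq : ∀ i ∈ q.support, i ≤ β) (hr : ∀ i ∈ r.support, γ ≤ i)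
    (hβγ : β < γ) {x : K} (hx0 : x ≠ 0) (hxroot : p.eval x = 0) (hy : q.eval x ≠ 0) :
    relProjHeight K ![1, x] ^ (γ - β) ≤
      t ^ Module.finrank ℚ K * relProjHeight K fun j : Fin (p.natDegree + 1) => p.coeff j := by
  have hdisj := disjoint_support_of_lt hβγ hq hr
  have h : q.eval x + r.eval x = 0 := by rwa [hpqr, eval_add] at hxroot
  have hq0 : q ≠ 0 := by rintro rfl; simp at hy
  have hr0 : r ≠ 0 := by rintro rfl; rw [eval_zero, add_zero] at h; exact hy h
  have hqc : ∀ i, q.coeff i = 0 ∨ q.coeff i = p.coeff i :=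
    hpqr ▸ coeff_eq_zero_or_eq_coeff_add hdisj
  have hrc : ∀ i, r.coeff i = 0 ∨ r.coeff i = p.coeff i := by
    simpa only [hpqr, add_comm r q] using coeff_eq_zero_or_eq_coeff_add hdisj.symm
  have hqt := card_support_le_of_disjoint hdisj (hpqr ▸ hterms) hr0
  have hrt := card_support_le_of_disjoint hdisj.symm (by rwa [hpqr, add_comm] at hterms) hq0
  have hp : p ≠ 0 := fun hp => hq0 <| ext fun i => by rcases hqc i with hi | hi <;> simp [hi, hp]
  have hC : (spanFinset (𝓞 K) Finset.univ fun j : Fin (p.natDegree + 1) => p.coeff j) ≠ 0 :=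
    spanFinset_ne_zero.mpr
      ⟨⟨_, p.natDegree.lt_succ_self⟩, Finset.mem_univ _, leadingCoeff_ne_zero.mpr hp⟩
  exact relProjHeight_pow_le_of_prod_norm_le hC hx0 hβγ.le
    (prod_norm_eval_le hq hr hqt hrt (norm_coeff_le_iSup hqc) (norm_coeff_le_iSup hrc) h)
    (prod_norm_pow_mul_absNorm_le hC hx0 hβγ.le hq hr (coeff_mem_spanFinset_coeff hqc)
      (coeff_mem_spanFinset_coeff hrc) h hy)

end NumberField

section Heights

variable {K : Type*} [Field K] [NumberField K]

lemma one_lt_elemHeight {x : K} (hx0 : x ≠ 0) (hxru : ∀ n : ℕ, 0 < n → x ^ n ≠ 1) :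
    1 < elemHeight K x := by
  rw [elemHeight, projHeight_eq_rpow]
  exact Real.one_lt_rpow (one_lt_relProjHeight_one_x hx0 hxru)
    (inv_pos.mpr (Nat.cast_pos.mpr Module.finrank_pos))

lemma polyHeight_zero : polyHeight K 0 = 0 := by
  rw [polyHeight, projHeight_eq_rpow, relProjHeight]
  simp [Embeddings.card, Module.finrank_pos.ne']

lemma one_le_polyHeight {p : K[X]} (hp : p ≠ 0) : 1 ≤ polyHeight K p := by
  rw [polyHeight, projHeight_eq_rpow]
  exact Real.one_le_rpow (one_le_relProjHeight (j := ⟨p.natDegree, p.natDegree.lt_succ_self⟩)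
    (leadingCoeff_ne_zero.mpr hp)) (by positivity)

theorem elemHeight_pow_le {t β γ : ℕ} {p q r : K[X]} (hpqr : p = q + r)
    (hterms : #p.support ≤ t + 1) (hq : ∀ i ∈ q.support, i ≤ β) (hr : ∀ i ∈ r.support, γ ≤ i)
    (hβγ : β < γ) {x : K} (hx0 : x ≠ 0) (hxroot : p.eval x = 0) (hy : q.eval x ≠ 0) :
    elemHeight K x ^ (γ - β) ≤ t * polyHeight K p := by
  have hD : Module.finrank ℚ K ≠ 0 := Module.finrank_pos.ne'
  rw [elemHeight, polyHeight, projHeight_eq_rpow, projHeight_eq_rpow,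
    ← Real.rpow_natCast, ← Real.rpow_mul (relProjHeight_nonneg _), mul_comm,
    Real.rpow_mul (relProjHeight_nonneg _), Real.rpow_natCast]
  calc _ ≤ ((t : ℝ) ^ Module.finrank ℚ K *
        relProjHeight K fun j : Fin (p.natDegree + 1) => p.coeff j) ^
          ((Module.finrank ℚ K : ℝ)⁻¹) :=
        Real.rpow_le_rpow (pow_nonneg (relProjHeight_nonneg _) _)
          (relProjHeight_pow_le hpqr hterms hq hr hβγ hx0 hxroot hy) (by positivity)
    _ = _ := by
        rw [Real.mul_rpow (by positivity) (relProjHeight_nonneg _),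
          Real.pow_rpow_inv_natCast (by positivity) hD]

end Heights

/-- Let `p ∈ ℚ̄[X]` (realized in a number field `K`) have at most `t+1` nonzero terms, `t ≥ 1`.
Assume `p = q + r` where every monomial of `q` has degree at most `β` and every monomial of `r`
has degree at least `γ`. Let `x ≠ 0` be a root of `p` that is not a root of unity.
If `γ − β > log(t · H(p)) / log H(x)` then `q(x) = 0` and `r(x) = 0`. -/
theorem stmt5 (K : Type*) [Field K] [NumberField K] (t β γ : ℕ) (ht : 1 ≤ t)
    (p q r : K[X]) (hpqr : p = q + r)
    (hterms : p.support.card ≤ t + 1)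
    (hq : ∀ i ∈ q.support, i ≤ β)
    (hr : ∀ i ∈ r.support, γ ≤ i)
    (x : K) (hx0 : x ≠ 0) (hxroot : p.eval x = 0)
    (hxru : ∀ n : ℕ, 0 < n → x ^ n ≠ 1)
    (hgap : Real.log (t * polyHeight K p) / Real.log (elemHeight K x) < (γ : ℝ) - (β : ℝ)) :
    q.eval x = 0 ∧ r.eval x = 0 := by
  have hx1 := one_lt_elemHeight hx0 hxru
  have hHx : 0 < Real.log (elemHeight K x) := Real.log_pos hx1
  have hHp : 0 ≤ Real.log (t * polyHeight K p) := by
    rcases eq_or_ne p 0 with rfl | hp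
    · rw [polyHeight_zero, mul_zero, Real.log_zero]
    · exact Real.log_nonneg (one_le_mul_of_one_le_of_one_le (by exact_mod_cast ht)
        (one_le_polyHeight hp))
  have hβγ : β < γ := by exact_mod_cast sub_pos.mp ((div_nonneg hHp hHx.le).trans_lt hgap)
  by_cases hy : q.eval x = 0
  · exact ⟨hy, by rwa [hpqr, eval_add, hy, zero_add] at hxroot⟩
  have h := Real.log_le_log (pow_pos (zero_lt_one.trans hx1) _)
    (elemHeight_pow_le hpqr hterms hq hr hβγ hx0 hxroot hy)
  rw [Real.log_pow, Nat.cast_sub hβγ.le] at h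
  exact absurd hgap (not_lt.mpr ((le_div_iff₀ hHx).mpr h))
end

section
/- Let t ≥ 1, d ≥ 1, d' ≥ 1, let 𝒫 be a set of prime numbers with |𝒫| ≥ (t+1) · log₂(d + d'), and let H be the set of all p-th roots of unity for all p ∈ 𝒫. Then H is a hitting set for the set of all polynomials of the form ∑_{j=0}^{t} c_j X^{α_j}(a + bX)^{β_j} with (a, b) ∈ {(0,1), (0,−1)}, α_j ≤ d and β_j ≤ d' for all j, and c_0,…,c_t ∈ ℚ. -/
/-!
Write `f = ∑ c_j b^{β_j} X^{α_j + β_j}`: it has at most `t + 1` monomials and degree at most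
`D = d + d'`. If `f` vanished at all `p`-th roots of unity, then so would the reduction of `f`
modulo `X^p - 1`, which has degree `< p` and hence is zero; so the leading exponent `e₀` of `f`
is congruent mod `p` to another exponent `e`. Every `p ∈ Ps` then divides the nonzero number
`∏_{e ≠ e₀} (e₀ - e) ≤ D^t`, whence `2^|Ps| ≤ ∏_{p ∈ Ps} p ≤ D^t < D^{t+1} ≤ 2^|Ps|`.
-/

open Polynomial

open Finset

theorem two_pow_card_le_pow_card_of_forall_exists_modEq {S Ps : Finset ℕ} {m : ℕ}
    (hS : ∀ e ∈ S, e < m) (hPs : ∀ p ∈ Ps, p.Prime) (h : ∀ p ∈ Ps, ∃ e ∈ S, e ≡ m [MOD p]) :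
    2 ^ Ps.card ≤ m ^ S.card := by
  have hdvd : ∏ p ∈ Ps, p ∣ ∏ e ∈ S, (m - e) := by
    refine prod_primes_dvd _ (fun p hp => (hPs p hp).prime) fun p hp => ?_
    obtain ⟨e, he, hmod⟩ := h p hp
    exact ((Nat.modEq_iff_dvd' (hS e he).le).mp hmod).trans (dvd_prod_of_mem _ he)
  calc 2 ^ Ps.card = ∏ _p ∈ Ps, 2 := (prod_const 2).symm
    _ ≤ ∏ p ∈ Ps, p := prod_le_prod' fun p hp => (hPs p hp).two_le
    _ ≤ ∏ e ∈ S, (m - e) := Nat.le_of_dvd (prod_pos fun e he => Nat.sub_pos_of_lt (hS e he)) hdvd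
    _ ≤ ∏ _e ∈ S, m := prod_le_prod' fun e _ => Nat.sub_le m e
    _ = m ^ S.card := prod_const m

theorem pow_le_two_pow_of_mul_logb_le_s8 {M k n : ℕ} (hM : 0 < M)
    (h : (k : ℝ) * Real.logb 2 M ≤ n) : M ^ k ≤ 2 ^ n := by
  rw [← Real.logb_pow, Real.logb_le_iff_le_rpow one_lt_two (by positivity), Real.rpow_natCast] at h
  exact_mod_cast h

namespace Polynomial

section FoldMod

variable {R : Type*} [CommSemiring R]

/-- The remainder of `f` modulo `X ^ n - 1`. -/
noncomputable def foldMod (n : ℕ) (f : R[X]) : R[X] :=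
  ∑ e ∈ f.support, C (f.coeff e) * X ^ (e % n)

theorem coeff_foldMod (n k : ℕ) (f : R[X]) :
    (foldMod n f).coeff k = ∑ e ∈ f.support with e % n = k, f.coeff e := by
  simp [foldMod, coeff_X_pow, sum_filter, eq_comm]

theorem natDegree_foldMod_lt {n : ℕ} (hn : 0 < n) (f : R[X]) : (foldMod n f).natDegree < n := by
  refine Nat.lt_of_le_sub_one hn (natDegree_sum_le_of_forall_le _ _ fun e _ => ?_)
  exact (natDegree_C_mul_X_pow_le _ _).trans (Nat.le_sub_one_of_lt (Nat.mod_lt e hn))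

theorem aeval_foldMod {A : Type*} [CommSemiring A] [Algebra R A] {n : ℕ} {θ : A}
    (hθ : θ ^ n = 1) (f : R[X]) : aeval θ (foldMod n f) = aeval θ f := by
  conv_rhs => rw [f.as_sum_support_C_mul_X_pow]
  simp only [foldMod, map_sum, map_mul, aeval_C, map_pow, aeval_X, ← pow_eq_pow_mod _ hθ]

theorem foldMod_eq_zero_of_forall_aeval_eq_zero {K L : Type*} [Field K] [CommRing L]
    [IsDomain L] [Algebra K L] {n : ℕ} {ζ : L} (hζ : IsPrimitiveRoot ζ n) (hn : 0 < n) {f : K[X]}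
    (hf : ∀ θ : L, θ ^ n = 1 → aeval θ f = 0) : foldMod n f = 0 := by
  refine (Polynomial.map_eq_zero_iff (algebraMap K L).injective).mp
    (eq_zero_of_natDegree_lt_card_of_eval_eq_zero' _ (nthRootsFinset n (1 : L)) (fun θ hθ => ?_) ?_)
  · rw [eval_map_algebraMap, aeval_foldMod ((mem_nthRootsFinset hn 1).mp hθ)]
    exact hf θ ((mem_nthRootsFinset hn 1).mp hθ)
  · rw [hζ.card_nthRootsFinset]
    exact natDegree_map_le.trans_lt (natDegree_foldMod_lt hn f)

theorem exists_mem_support_erase_modEq_natDegree {K L : Type*} [Field K] [CommRing L]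
    [IsDomain L] [Algebra K L] {n : ℕ} {ζ : L} (hζ : IsPrimitiveRoot ζ n) (hn : 0 < n)
    {f : K[X]} (h0 : f ≠ 0) (hf : ∀ θ : L, θ ^ n = 1 → aeval θ f = 0) :
    ∃ e ∈ f.support.erase f.natDegree, e ≡ f.natDegree [MOD n] := by
  by_contra! hcoll
  have hfiber : {e ∈ f.support | e % n = f.natDegree % n} = {f.natDegree} := by
    refine eq_singleton_iff_unique_mem.mpr
      ⟨mem_filter.mpr ⟨natDegree_mem_support_of_nonzero h0, rfl⟩, fun e he => ?_⟩
    rw [mem_filter] at he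
    by_contra hne
    exact hcoll e (mem_erase.mpr ⟨hne, he.1⟩) he.2
  have := congrArg (coeff · (f.natDegree % n)) (foldMod_eq_zero_of_forall_aeval_eq_zero hζ hn hf)
  simp only [coeff_foldMod, hfiber, sum_singleton, coeff_natDegree, coeff_zero] at this
  exact leadingCoeff_ne_zero.mpr h0 this

end FoldMod

theorem support_sum_C_mul_X_pow_subset {R ι : Type*} [Semiring R] [DecidableEq ι]
    (s : Finset ι) (a : ι → R) (n : ι → ℕ) :
    (∑ j ∈ s, C (a j) * X ^ n j).support ⊆ s.image n := by
  intro e he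
  by_contra hne
  refine mem_support_iff.mp he ?_
  rw [finsetSum_coeff]
  refine sum_eq_zero fun j hj => ?_
  rw [coeff_C_mul_X_pow, if_neg fun h => hne (mem_image.mpr ⟨j, hj, h.symm⟩)]

theorem exists_pow_eq_one_aeval_ne_zero {K L : Type*} [Field K] [CommRing L]
    [IsDomain L] [Algebra K L] {f : K[X]} (h0 : f ≠ 0) {Ps : Finset ℕ} (hPs : ∀ p ∈ Ps, p.Prime)
    (hroots : ∀ p ∈ Ps, ∃ ζ : L, IsPrimitiveRoot ζ p)
    (hcard : f.natDegree ^ (f.support.card - 1) < 2 ^ Ps.card) :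
    ∃ p ∈ Ps, ∃ θ : L, θ ^ p = 1 ∧ aeval θ f ≠ 0 := by
  by_contra! hf
  have hcoll : ∀ p ∈ Ps, ∃ e ∈ f.support.erase f.natDegree, e ≡ f.natDegree [MOD p] := by
    intro p hp
    obtain ⟨ζ, hζ⟩ := hroots p hp
    exact exists_mem_support_erase_modEq_natDegree hζ (hPs p hp).pos h0 (hf p hp)
  have hlt : ∀ e ∈ f.support.erase f.natDegree, e < f.natDegree := fun e he =>
    lt_of_le_of_ne (le_natDegree_of_mem_supp e (mem_of_mem_erase he)) (ne_of_mem_erase he)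
  have := two_pow_card_le_pow_card_of_forall_exists_modEq hlt hPs hcoll
  rw [card_erase_of_mem (natDegree_mem_support_of_nonzero h0)] at this
  exact this.not_gt hcard

end Polynomial

theorem stmt8_general (t d d' : ℕ) (hd : 1 ≤ d) (hd' : 1 ≤ d')
    (Ps : Finset ℕ) (hprime : ∀ p ∈ Ps, p.Prime)
    (hcard : ((t : ℝ) + 1) * Real.logb 2 ((d : ℝ) + d') ≤ Ps.card) :
    IsHittingSet {θ : ℂ | ∃ p ∈ Ps, θ ^ p = 1}
      {f : ℚ[X] | ∃ (c : Fin (t + 1) → ℚ) (α β : Fin (t + 1) → ℕ) (a b : ℚ),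
        ((a, b) = (0, 1) ∨ (a, b) = (0, -1)) ∧
        (∀ j, α j ≤ d) ∧ (∀ j, β j ≤ d') ∧
        f = ∑ j, Polynomial.C (c j) * X ^ α j *
              (Polynomial.C a + Polynomial.C b * X) ^ β j} := by
  rintro f ⟨c, α, β, a, b, hab, hα, hβ, rfl⟩ h0
  obtain rfl : a = 0 := by rcases hab with h | h <;> exact congrArg Prod.fst h
  have hmonomial : ∑ j, C (c j) * X ^ α j * (C 0 + C b * X) ^ β j =
      ∑ j, C (c j * b ^ β j) * X ^ (α j + β j) := by
    simp only [map_zero, zero_add, mul_pow, map_mul, map_pow]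
    exact sum_congr rfl fun j _ => by ring
  rw [hmonomial] at h0 ⊢
  set f := ∑ j, C (c j * b ^ β j) * X ^ (α j + β j)
  have hsupp : f.support.card ≤ t + 1 :=
    (card_le_card (support_sum_C_mul_X_pow_subset _ _ _)).trans (card_image_le.trans_eq (by simp))
  have hdeg : f.natDegree ≤ d + d' := natDegree_sum_le_of_forall_le _ _ fun j _ =>
    (natDegree_C_mul_X_pow_le _ _).trans (add_le_add (hα j) (hβ j))
  have hpow : (d + d') ^ (t + 1) ≤ 2 ^ Ps.card :=
    pow_le_two_pow_of_mul_logb_le_s8 (by omega) (by exact_mod_cast hcard)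
  obtain ⟨p, hp, θ, hθ, hne⟩ := exists_pow_eq_one_aeval_ne_zero h0 hprime
    (fun p hp => ⟨_, Complex.isPrimitiveRoot_exp p (hprime p hp).ne_zero⟩)
    (calc f.natDegree ^ (f.support.card - 1) ≤ (d + d') ^ t :=
          (Nat.pow_le_pow_left hdeg _).trans (Nat.pow_le_pow_right (by omega) (by omega))
      _ < (d + d') ^ (t + 1) := Nat.pow_lt_pow_right (by omega) (by omega)
      _ ≤ 2 ^ Ps.card := hpow)
  exact ⟨θ, ⟨p, hp, hθ⟩, hne⟩

/-- Let `t, d, d' ≥ 1` and let `Ps` be a set of at least `(t+1)·log₂(d+d')` primes. Then the set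
of all `p`-th roots of unity for `p ∈ Ps` is a hitting set for the set of polynomials of the
form `∑_{j=0}^{t} c_j X^{α_j}(a + bX)^{β_j}` with `(a,b) ∈ {(0,1), (0,−1)}`, `α_j ≤ d` and
`β_j ≤ d'` for all `j`, and rational coefficients `c_j`. -/
theorem stmt8 (t d d' : ℕ) (ht : 1 ≤ t) (hd : 1 ≤ d) (hd' : 1 ≤ d')
    (Ps : Finset ℕ) (hprime : ∀ p ∈ Ps, p.Prime)
    (hcard : ((t : ℝ) + 1) * Real.logb 2 ((d : ℝ) + d') ≤ Ps.card) :
    IsHittingSet {θ : ℂ | ∃ p ∈ Ps, θ ^ p = 1}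
      {f : ℚ[X] | ∃ (c : Fin (t + 1) → ℚ) (α β : Fin (t + 1) → ℕ) (a b : ℚ),
        ((a, b) = (0, 1) ∨ (a, b) = (0, -1)) ∧
        (∀ j, α j ≤ d) ∧ (∀ j, β j ≤ d') ∧
        f = ∑ j, Polynomial.C (c j) * X ^ α j *
              (Polynomial.C a + Polynomial.C b * X) ^ β j} :=
  stmt8_general t d d' hd hd' Ps hprime hcard
end

section
/- There exists a constant ε > 0 such that for all sufficiently large n the polynomial P(X) = ∏_{i=1}^{2^n} (X^i − 1) cannot be written in the form ∑_{j=0}^{t} c_j X^{α_j}(a + bX)^{β_j} with a, b, c_j ∈ ℚ, t ≤ 2^{εn}, all exponents α_j, β_j of bit size at most 2^{εn} (i.e., α_j, β_j < 2^{2^{εn}}), and all coefficients c_j of bit size at most 2^{εn} (i.e., the absolute values of the numerator and of the denominator of each c_j are less than 2^{2^{εn}}). -/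
/-!
A nonzero `f = ∑_{j<k} c_j u^{α_j} v^{β_j}`, with `u` and `v` of degree at most one, vanishes
at a point `x` with `u(x) v(x) ≠ 0` to order less than `(k+1).choose 2`, however large the
exponents. After passing to a linearly independent subfamily, the Wronskian `W` of the
`u^{α_j} v^{β_j}` is nonzero. Replacing one of its columns by the derivatives of `f` shows
`(X - x)^(m+1-k) ∣ W` if `(X - x)^m ∣ f`, while `∏_{i<k} (uv)^i · W = ∏_j u^{α_j} v^{β_j} · q`
with `deg q ≤ k.choose 2`; as `X - x` is coprime to `u` and `v`, `m + 1 - k ≤ k.choose 2`.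

Now `∏_{i=1}^{2^n} (X^i - 1)` vanishes to order at least `2^(n-1)` at both `1` and `-1`, and
`a + bX` is nonzero at one of them unless `a = b = 0`. So a representation with `t + 1` terms
forces `2^(n-1) < (t+2).choose 2`, which fails once `t ≤ 2^(n/4)` and `n ≥ 4`.
-/

open Polynomial

theorem Matrix.exists_mulVec_eq_zero_of_det_eq_zero {R : Type*} [CommRing R] {k : ℕ}
    (A : Matrix (Fin (k + 1)) (Fin (k + 1)) R) (hA : A.det = 0) :
    ∃ c, A.mulVec c = 0 ∧ c (Fin.last k) = (A.submatrix Fin.castSucc Fin.castSucc).det := by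
  refine ⟨fun j => A.adjugate j (Fin.last k), funext fun i => ?_, ?_⟩
  · simpa [hA, Matrix.mul_apply, mulVec, dotProduct] using
      congr_fun (congr_fun A.mul_adjugate i) (Fin.last k)
  · change A.adjugate (Fin.last k) (Fin.last k) = _
    rw [adjugate_fin_succ_eq_det_submatrix, Fin.succAbove_last, ← two_mul, pow_mul]
    simp

theorem Fin.sum_val_eq_choose_two (r : ℕ) : ∑ i : Fin r, (i : ℕ) = r.choose 2 := by
  rw [Fin.sum_univ_eq_sum_range (fun i => i) r, Finset.sum_range_id, Nat.choose_two_right]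

namespace Polynomial

open Matrix

variable {R K : Type*} [CommRing R] [Field K]

theorem mul_derivative_pow (q : R[X]) (n : ℕ) :
    q * derivative (q ^ n) = C (n : R) * q ^ n * derivative q := by
  cases n with
  | zero => simp
  | succ n => rw [derivative_pow, Nat.add_sub_cancel, pow_succ]; ring

theorem exists_mul_iterate_derivative_pow_mul_pow {u v : R[X]} (hu : u.natDegree ≤ 1)
    (hv : v.natDegree ≤ 1) (α β i : ℕ) :
    ∃ p : R[X], p.natDegree ≤ i ∧
      (u * v) ^ i * derivative^[i] (u ^ α * v ^ β) = u ^ α * v ^ β * p := by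
  induction i with
  | zero => exact ⟨1, by simp, by simp⟩
  | succ i ih =>
    obtain ⟨p, hp, h⟩ := ih
    have hu' : (derivative u).natDegree ≤ 0 := (natDegree_derivative_le u).trans (by omega)
    have hv' : (derivative v).natDegree ≤ 0 := (natDegree_derivative_le v).trans (by omega)
    refine ⟨(C ((α : R) - i) * derivative u * v + C ((β : R) - i) * u * derivative v) * p
      + u * v * derivative p, ?_, ?_⟩
    · have hfirst : (C ((α : R) - i) * derivative u * v
          + C ((β : R) - i) * u * derivative v).natDegree ≤ 1 :=
        natDegree_add_le_of_degree_le
          (natDegree_mul_le_of_le (natDegree_mul_le_of_le (natDegree_C _).le hu') hv)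
          (natDegree_mul_le_of_le (natDegree_mul_le_of_le (natDegree_C _).le hu) hv')
      have hlast : (u * v * derivative p).natDegree ≤ i + 1 := by
        by_cases hp0 : p.natDegree = 0
        · rw [eq_C_of_natDegree_eq_zero hp0, derivative_C, mul_zero, natDegree_zero]
          exact Nat.zero_le _
        · exact (natDegree_mul_le_of_le (natDegree_mul_le_of_le hu hv)
            (Nat.le_sub_one_of_lt (natDegree_derivative_lt hp0))).trans (by omega)
      exact natDegree_add_le_of_degree_le ((natDegree_mul_le_of_le hfirst hp).trans (by omega))
        hlast
    · have h' := congr_arg derivative h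
      have huv := mul_derivative_pow (u * v) i
      simp only [derivative_mul] at h' huv
      rw [Function.iterate_succ_apply', C_sub, C_sub]
      linear_combination (u * v) * h' - C (i : R) * (derivative u * v + u * derivative v) * h
        - derivative^[i] (u ^ α * v ^ β) * huv
        + v * v ^ β * p * mul_derivative_pow u α + u * u ^ α * p * mul_derivative_pow v β

theorem natDegree_det_le_sum {n : Type*} [Fintype n] [DecidableEq n] (M : Matrix n n R[X])
    (e : n → ℕ) (h : ∀ i j, (M i j).natDegree ≤ e i) : M.det.natDegree ≤ ∑ i, e i := by
  rw [← det_transpose, det_apply]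
  refine natDegree_sum_le_of_forall_le _ _ fun σ _ => ?_
  rw [Units.smul_def, zsmul_eq_mul]
  refine (natDegree_mul_le_of_le (natDegree_intCast _).le <| (natDegree_prod_le _ _).trans <|
    Finset.sum_le_sum fun i _ => h i (σ i)).trans_eq (zero_add _)

theorem wronskian_mul_mul (d a b : R[X]) : wronskian (d * a) (d * b) = d ^ 2 * wronskian a b := by
  simp only [wronskian, derivative_mul]; ring

theorem exists_eq_C_mul_of_wronskian_eq_zero [CharZero K] {p q : K[X]} (hq : q ≠ 0)
    (h : wronskian q p = 0) : ∃ s : K, p = C s * q := by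
  classical
  obtain ⟨p₁, q₁, hp, hq', hunit⟩ := extract_gcd p q
  have hd : gcd p q ≠ 0 := gcd_ne_zero_of_right hq
  generalize gcd p q = d at hp hq' hd
  subst hp hq'
  rw [wronskian_mul_mul, mul_eq_zero, or_iff_right (pow_ne_zero 2 hd)] at h
  obtain ⟨hdq₁, hdp₁⟩ :=
    (gcd_isUnit_iff_isRelPrime.mp hunit).isCoprime.symm.wronskian_eq_zero_iff.mp h
  obtain ⟨δ, rfl⟩ : ∃ δ, p₁ = C δ := ⟨_, eq_C_of_derivative_eq_zero hdp₁⟩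
  obtain ⟨γ, rfl⟩ : ∃ γ, q₁ = C γ := ⟨_, eq_C_of_derivative_eq_zero hdq₁⟩
  have hγ : γ ≠ 0 := by rintro rfl; simp at hq
  exact ⟨δ / γ, by rw [mul_left_comm, ← C_mul, div_mul_cancel₀ δ hγ]⟩

noncomputable def wronskianMatrix {k : ℕ} (f : Fin k → R[X]) : Matrix (Fin k) (Fin k) R[X] :=
  Matrix.of fun i j => derivative^[i] (f j)

-- Differentiating the relation of row `i` and subtracting that of row `i + 1` shows that the
-- first `k` rows also kill `c'`, hence `c_last • c' - c_last' • c`. Its last entry vanishes, so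
-- the invertible top-left block kills the rest of it.
theorem wronskian_eq_zero_of_wronskianMatrix_mulVec_eq_zero [IsDomain R] {k : ℕ}
    {f c : Fin (k + 1) → R[X]} (hc : wronskianMatrix f *ᵥ c = 0)
    (hinit : (wronskianMatrix (f ∘ Fin.castSucc)).det ≠ 0) (j : Fin (k + 1)) :
    wronskian (c (Fin.last k)) (c j) = 0 := by
  have hrow : ∀ i : Fin (k + 1), ∑ j, derivative^[i] (f j) * c j = 0 := fun i => congr_fun hc i
  have hrow' : ∀ i : Fin k, ∑ j, derivative^[i] (f j) * derivative (c j) = 0 := fun i => by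
    have h := congr_arg derivative (hrow i.castSucc)
    simp only [derivative_sum, derivative_mul, Finset.sum_add_distrib, derivative_zero] at h
    have hnext := hrow i.succ
    simp only [Fin.val_succ, Function.iterate_succ_apply'] at hnext
    simpa [hnext] using h
  have hker : wronskianMatrix (f ∘ Fin.castSucc) *ᵥ
      (fun j : Fin k => wronskian (c (Fin.last k)) (c j.castSucc)) = 0 := by
    ext1 i
    have h₀ := hrow i.castSucc
    have h₁ := hrow' i
    rw [Fin.sum_univ_castSucc] at h₀ h₁
    simp only [mulVec, dotProduct, wronskianMatrix, Matrix.of_apply, wronskian,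
      Function.comp_apply, Fin.val_castSucc, Pi.zero_apply] at h₀ h₁ ⊢
    calc _ = c (Fin.last k) *
            ∑ j : Fin k, derivative^[i] (f j.castSucc) * derivative (c j.castSucc) -
          derivative (c (Fin.last k)) *
            ∑ j : Fin k, derivative^[i] (f j.castSucc) * c j.castSucc := by
          simp only [Finset.mul_sum, ← Finset.sum_sub_distrib]
          exact Finset.sum_congr rfl fun _ _ => by ring
      _ = 0 := by linear_combination c (Fin.last k) * h₁ - derivative (c (Fin.last k)) * h₀
  exact Fin.lastCases (wronskian_self_eq_zero _)
    (fun j => congr_fun (eq_zero_of_mulVec_eq_zero hinit hker) j) j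

theorem exists_sum_smul_eq_zero_of_det_wronskianMatrix_eq_zero [CharZero K] {k : ℕ}
    {f : Fin (k + 1) → K[X]} (hW : (wronskianMatrix f).det = 0)
    (hinit : (wronskianMatrix (f ∘ Fin.castSucc)).det ≠ 0) :
    ∃ s : Fin (k + 1) → K, s (Fin.last k) = 1 ∧ ∑ j, s j • f j = 0 := by
  obtain ⟨c, hc, hc_last⟩ := (wronskianMatrix f).exists_mulVec_eq_zero_of_det_eq_zero hW
  have hw := wronskian_eq_zero_of_wronskianMatrix_mulVec_eq_zero hc hinit
  change _ = (wronskianMatrix (f ∘ Fin.castSucc)).det at hc_last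
  rw [← hc_last] at hinit
  choose s hs using fun j => exists_eq_C_mul_of_wronskian_eq_zero hinit (hw j)
  refine ⟨s, ?_, ?_⟩
  · have hlast : (C (s (Fin.last k)) - 1) * c (Fin.last k) = 0 := by
      linear_combination -(hs (Fin.last k))
    rwa [mul_eq_zero, or_iff_left hinit, sub_eq_zero, ← C_1, C_inj] at hlast
  · have hrow₀ : ∑ j, f j * c j = 0 := congr_fun hc 0
    have hprod : (∑ j, s j • f j) * c (Fin.last k) = 0 := by
      rw [← hrow₀, Finset.sum_mul]
      exact Finset.sum_congr rfl fun j _ => by rw [hs j, smul_eq_C_mul]; ring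
    exact (mul_eq_zero.mp hprod).resolve_right hinit

theorem det_wronskianMatrix_ne_zero_of_linearIndependent [CharZero K] {k : ℕ} {f : Fin k → K[X]}
    (hf : LinearIndependent K f) : (wronskianMatrix f).det ≠ 0 := by
  induction k with
  | zero => simp
  | succ k ih =>
    intro hW
    obtain ⟨s, hs_last, hs⟩ := exists_sum_smul_eq_zero_of_det_wronskianMatrix_eq_zero hW
      (ih (hf.comp _ (Fin.castSucc_injective k)))
    exact one_ne_zero (hs_last ▸ Fintype.linearIndependent_iff.mp hf s hs (Fin.last k))

theorem pow_sub_dvd_det_wronskianMatrix {k m : ℕ} {g : Fin k → K[X]} {c : Fin k → K}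
    {q : K[X]} (hc : c ≠ 0) (hdvd : q ^ m ∣ ∑ j, c j • g j) :
    q ^ (m + 1 - k) ∣ (wronskianMatrix g).det := by
  obtain ⟨j₀, hj₀⟩ := Function.ne_iff.mp hc
  have hcol (i : Fin k) : q ^ (m + 1 - k) ∣ ∑ j, C (c j) • wronskianMatrix g i j := by
    have hi : ∑ j, C (c j) • wronskianMatrix g i j = derivative^[i] (∑ j, c j • g j) := by
      simp [wronskianMatrix, iterate_derivative_sum, smul_eq_C_mul]
    rw [hi]
    exact (pow_dvd_pow q (by omega)).trans (pow_sub_dvd_iterate_derivative_of_pow_dvd i hdvd)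
  choose h hh using hcol
  have hdet := det_updateCol_sum (wronskianMatrix g) j₀ (C ∘ c)
  rw [show (fun i => ∑ j, (C ∘ c) j • wronskianMatrix g i j) = q ^ (m + 1 - k) • h from
      by ext1 i; exact hh i,
    det_updateCol_smul, smul_eq_mul, Function.comp_apply] at hdet
  exact (isUnit_C.mpr hj₀.isUnit).dvd_mul_left.mp (hdet ▸ dvd_mul_right _ _)

theorem exists_prod_mul_det_wronskianMatrix_eq {u v : R[X]} (hu : u.natDegree ≤ 1)
    (hv : v.natDegree ≤ 1) {r : ℕ} (α β : Fin r → ℕ) :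
    ∃ q : R[X], q.natDegree ≤ r.choose 2 ∧
      (∏ i : Fin r, (u * v) ^ (i : ℕ)) * (wronskianMatrix fun j => u ^ α j * v ^ β j).det
        = (∏ j, u ^ α j * v ^ β j) * q := by
  choose P hP_deg hP using fun (i j : Fin r) =>
    exists_mul_iterate_derivative_pow_mul_pow hu hv (α j) (β j) i
  refine ⟨(Matrix.of P).det, ?_, ?_⟩
  · exact (natDegree_det_le_sum _ (fun i : Fin r => (i : ℕ)) hP_deg).trans_eq
      (Fin.sum_val_eq_choose_two r)
  · rw [← det_mul_column, ← det_mul_row]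
    exact congr_arg det (Matrix.ext hP)

theorem isCoprime_X_sub_C_of_eval_ne_zero {p : K[X]} {x : K} (hp : p.eval x ≠ 0) :
    IsCoprime (X - C x) p :=
  (irreducible_X_sub_C x).coprime_iff_not_dvd.mpr (by rwa [dvd_iff_isRoot])

theorem lt_choose_two_of_pow_dvd_of_linearIndependent [CharZero K] {u v : K[X]}
    (hu : u.natDegree ≤ 1) (hv : v.natDegree ≤ 1) {x : K} (hux : u.eval x ≠ 0)
    (hvx : v.eval x ≠ 0) {r m : ℕ} {α β : Fin r → ℕ}
    (hind : LinearIndependent K fun j => u ^ α j * v ^ β j) {c : Fin r → K} (hc : c ≠ 0)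
    (hdvd : (X - C x) ^ m ∣ ∑ j, c j • (u ^ α j * v ^ β j)) : m < (r + 1).choose 2 := by
  obtain ⟨q, hq_deg, hq⟩ := exists_prod_mul_det_wronskianMatrix_eq hu hv α β
  have hu0 : u ≠ 0 := by rintro rfl; simp at hux
  have hv0 : v ≠ 0 := by rintro rfl; simp at hvx
  have hq0 : q ≠ 0 := by
    rintro rfl
    rw [mul_zero, mul_eq_zero, Finset.prod_eq_zero_iff] at hq
    exact hq.elim (fun ⟨i, _, hi⟩ => pow_ne_zero _ (mul_ne_zero hu0 hv0) hi)
      (det_wronskianMatrix_ne_zero_of_linearIndependent hind)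
  have hcop : IsCoprime ((X - C x) ^ (m + 1 - r)) (∏ j, u ^ α j * v ^ β j) :=
    .pow_left <| .prod_right fun j _ =>
      .mul_right (isCoprime_X_sub_C_of_eval_ne_zero hux).pow_right
        (isCoprime_X_sub_C_of_eval_ne_zero hvx).pow_right
  have hdvd_q : (X - C x) ^ (m + 1 - r) ∣ q :=
    hcop.dvd_of_dvd_mul_left (hq ▸ (pow_sub_dvd_det_wronskianMatrix hc hdvd).mul_left _)
  have := natDegree_le_of_dvd hdvd_q hq0
  rw [natDegree_pow, natDegree_X_sub_C, mul_one] at this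
  have hchoose : (r + 1).choose 2 = r + r.choose 2 := by simpa using Nat.choose_succ_succ' r 1
  omega

theorem lt_choose_two_of_pow_dvd_sum [CharZero K] {u v : K[X]} (hu : u.natDegree ≤ 1)
    (hv : v.natDegree ≤ 1) {x : K} (hux : u.eval x ≠ 0) (hvx : v.eval x ≠ 0) {k m : ℕ}
    (c : Fin k → K) (α β : Fin k → ℕ) (hf : ∑ j, C (c j) * u ^ α j * v ^ β j ≠ 0)
    (hdvd : (X - C x) ^ m ∣ ∑ j, C (c j) * u ^ α j * v ^ β j) : m < (k + 1).choose 2 := by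
  set g : Fin k → K[X] := fun j => u ^ α j * v ^ β j
  have hfg : ∑ j, C (c j) * u ^ α j * v ^ β j = ∑ j, c j • g j := by
    simp only [g, smul_eq_C_mul, mul_assoc]
  rw [hfg] at hf hdvd
  obtain ⟨κ, a, ha, hspan, hind⟩ := exists_linearIndependent' K g
  have : Finite κ := Finite.of_injective a ha
  set e := Finite.equivFin κ
  have hmem : ∑ j, c j • g j ∈ Submodule.span K (Set.range (g ∘ a ∘ e.symm)) := by
    rw [← Function.comp_assoc, e.symm.surjective.range_comp, hspan]
    exact Submodule.sum_mem _ fun j _ => Submodule.smul_mem _ _ (Submodule.subset_span ⟨j, rfl⟩)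
  obtain ⟨c', hc'⟩ := (Submodule.mem_span_range_iff_exists_fun K).mp hmem
  have hc'0 : c' ≠ 0 := by
    rintro rfl
    simp only [Pi.zero_apply, zero_smul, Finset.sum_const_zero] at hc'
    exact hf hc'.symm
  have hr : Nat.card κ ≤ k := by simpa using Nat.card_le_card_of_injective a ha
  calc m < (Nat.card κ + 1).choose 2 :=
        lt_choose_two_of_pow_dvd_of_linearIndependent (α := α ∘ a ∘ e.symm)
          (β := β ∘ a ∘ e.symm) hu hv hux hvx (hind.comp _ e.symm.injective) hc'0 (hc' ▸ hdvd)
    _ ≤ (k + 1).choose 2 := Nat.choose_le_choose 2 (by omega)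

theorem pow_dvd_prod_X_pow_sub_one (N : ℕ) :
    (X - C 1) ^ N ∣ ∏ i ∈ Finset.Icc 1 N, (X ^ i - 1 : R[X]) := by
  have h := Finset.prod_dvd_prod_of_dvd (s := Finset.Icc 1 N) (fun _ => X - C 1)
    (fun i => (X ^ i - 1 : R[X])) fun i _ => by simpa using sub_dvd_pow_sub_pow (X : R[X]) 1 i
  rwa [Finset.prod_const, Nat.card_Icc, Nat.add_sub_cancel] at h

theorem pow_dvd_prod_X_pow_sub_one_two_mul (N : ℕ) :
    (X - C (-1)) ^ N ∣ ∏ i ∈ Finset.Icc 1 (2 * N), (X ^ i - 1 : R[X]) := by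
  induction N with
  | zero => simp
  | succ N ih =>
    rw [mul_add, mul_one, Finset.prod_Icc_succ_top (by omega), Finset.prod_Icc_succ_top (by omega),
      pow_succ]
    have hsq : X - C (-1) ∣ (X ^ 2 - 1 : R[X]) := ⟨X - 1, by rw [map_neg, map_one]; ring⟩
    refine mul_dvd_mul (ih.mul_right _) (hsq.trans ?_)
    have h := sub_dvd_pow_sub_pow ((X : R[X]) ^ 2) 1 (N + 1)
    rwa [one_pow, ← pow_mul, show 2 * (N + 1) = 2 * N + 1 + 1 by ring] at h

theorem prod_X_pow_sub_one_ne_zero [IsDomain R] (N : ℕ) :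
    ∏ i ∈ Finset.Icc 1 N, (X ^ i - 1 : R[X]) ≠ 0 :=
  Finset.prod_ne_zero_iff.mpr fun i hi => by
    simpa using X_pow_sub_C_ne_zero (Finset.mem_Icc.mp hi).1 (1 : R)

theorem lt_choose_two_of_pow_dvd_sum_X_pow_mul_linear_pow [CharZero K] {k m : ℕ} (c : Fin k → K)
    (α β : Fin k → ℕ) (a b : K)
    (hf : ∑ j, C (c j) * X ^ α j * (C a + C b * X) ^ β j ≠ 0)
    (h₁ : (X - C 1) ^ m ∣ ∑ j, C (c j) * X ^ α j * (C a + C b * X) ^ β j)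
    (h₂ : (X - C (-1)) ^ m ∣ ∑ j, C (c j) * X ^ α j * (C a + C b * X) ^ β j) :
    m < (k + 1).choose 2 := by
  have hX : (X : K[X]).natDegree ≤ 1 := natDegree_X_le
  have hL : (C a + C b * X).natDegree ≤ 1 := by
    simpa only [add_comm] using natDegree_linear_le (a := b) (b := a)
  by_cases hab : a = 0 ∧ b = 0
  · obtain ⟨rfl, rfl⟩ := hab
    have hsum : ∑ j, C (c j) * X ^ α j * (C 0 + C 0 * X) ^ β j
        = ∑ j, C (c j * 0 ^ β j) * X ^ α j * (1 : K[X]) ^ β j := by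
      refine Finset.sum_congr rfl fun j _ => ?_
      simp only [map_zero, zero_mul, add_zero, map_mul, map_pow, one_pow, mul_one]
      ring
    rw [hsum] at hf h₁
    exact lt_choose_two_of_pow_dvd_sum hX (natDegree_one.trans_le zero_le_one) (by simp)
      (by simp) _ α β hf h₁
  · obtain h | h : a + b ≠ 0 ∨ a - b ≠ 0 := by
      by_contra! h
      exact hab ⟨by linear_combination (h.1 + h.2) / 2, by linear_combination (h.1 - h.2) / 2⟩
    · exact lt_choose_two_of_pow_dvd_sum hX hL (x := 1) (by simp) (by simpa using h)
        c α β hf h₁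
    · exact lt_choose_two_of_pow_dvd_sum hX hL (x := -1) (by simp)
        (by simpa [sub_eq_add_neg] using h) c α β hf h₂

end Polynomial

theorem add_two_choose_two_le_two_pow_of_le_rpow {n t : ℕ} (hn : 4 ≤ n)
    (ht : (t : ℝ) ≤ 2 ^ ((1 / 4 : ℝ) * n)) : (t + 2).choose 2 ≤ 2 ^ (n - 1) := by
  set y : ℝ := 2 ^ ((1 / 4 : ℝ) * n)
  have hy4 : y ^ 4 = 2 ^ n := by
    rw [← Real.rpow_mul_natCast zero_le_two, ← Real.rpow_natCast]
    congr 1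
    push_cast
    ring
  have hy : 2 ≤ y := by
    calc (2 : ℝ) = 2 ^ (1 : ℝ) := (Real.rpow_one 2).symm
      _ ≤ y := Real.rpow_le_rpow_of_exponent_le one_le_two (by
        have : (4 : ℝ) ≤ n := by exact_mod_cast hn
        linarith)
  have hprod : (t + 2) * (t + 1) ≤ 2 ^ n := by
    have : ((t + 2) * (t + 1) : ℝ) ≤ 2 ^ n := by
      rw [← hy4]
      nlinarith [mul_le_mul hy hy zero_le_two (by linarith), Nat.cast_nonneg (α := ℝ) t]
    exact_mod_cast this
  rw [Nat.choose_two_right, show t + 2 - 1 = t + 1 from rfl]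
  have : 2 ^ n = 2 * 2 ^ (n - 1) := by rw [← pow_succ']; congr 1; omega
  omega

/-- There is a constant `ε > 0` such that for all sufficiently large `n`, the polynomial
`∏_{i=1}^{2^n} (X^i − 1)` cannot be written as `∑_{j=0}^{t} c_j X^{α_j}(a + bX)^{β_j}` with
`t ≤ 2^{εn}`, all exponents `α_j, β_j` of bit size at most `2^{εn}` (i.e. `< 2^{2^{εn}}`), and
all coefficients `c_j` of bit size at most `2^{εn}` (i.e. numerators and denominators of
absolute value `< 2^{2^{εn}}`). -/
theorem stmt10 :
    ∃ ε : ℝ, 0 < ε ∧ ∃ n₀ : ℕ, ∀ n : ℕ, n₀ ≤ n →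
      ∀ (t : ℕ) (c : Fin (t + 1) → ℚ) (α β : Fin (t + 1) → ℕ) (a b : ℚ),
        (t : ℝ) ≤ (2 : ℝ) ^ (ε * n) →
        (∀ j, (α j : ℝ) < (2 : ℝ) ^ ((2 : ℝ) ^ (ε * n))) →
        (∀ j, (β j : ℝ) < (2 : ℝ) ^ ((2 : ℝ) ^ (ε * n))) →
        (∀ j, (|(c j).num| : ℝ) < (2 : ℝ) ^ ((2 : ℝ) ^ (ε * n)) ∧
              ((c j).den : ℝ) < (2 : ℝ) ^ ((2 : ℝ) ^ (ε * n))) →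
        (∏ i ∈ Finset.Icc 1 (2 ^ n), (X ^ i - 1) : ℚ[X]) ≠
          ∑ j, Polynomial.C (c j) * X ^ α j *
            (Polynomial.C a + Polynomial.C b * X) ^ β j := by
  refine ⟨1 / 4, by norm_num, 4, fun n hn t c α β a b ht _ _ _ hP => ?_⟩
  have h₁ : (X - C 1) ^ 2 ^ (n - 1) ∣ ∏ i ∈ Finset.Icc 1 (2 ^ n), (X ^ i - 1 : ℚ[X]) :=
    (pow_dvd_pow _ (Nat.pow_le_pow_right two_pos (n.sub_le 1))).trans
      (pow_dvd_prod_X_pow_sub_one _)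
  have h₂ : (X - C (-1)) ^ 2 ^ (n - 1) ∣ ∏ i ∈ Finset.Icc 1 (2 ^ n), (X ^ i - 1 : ℚ[X]) := by
    rw [show 2 ^ n = 2 * 2 ^ (n - 1) by rw [← pow_succ']; congr 1; omega]
    exact pow_dvd_prod_X_pow_sub_one_two_mul _
  have hP₀ := prod_X_pow_sub_one_ne_zero (R := ℚ) (2 ^ n)
  rw [hP] at h₁ h₂ hP₀
  exact (add_two_choose_two_le_two_pow_of_le_rpow hn ht).not_gt
    (lt_choose_two_of_pow_dvd_sum_X_pow_mul_linear_pow c α β a b hP₀ h₁ h₂)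
end

section
/- Let t ∈ ℕ, let c'_0, …, c'_t, c, d be real numbers with d ≠ 0, and let β_0 < β_1 < … < β_t be natural numbers. If the polynomial f(X) = ∑_{j=0}^{t} c'_j (c + dX)^{β_j} is not identically zero, then f has at most 2t + 1 distinct real roots. Consequently, any set of 2t + 2 distinct real numbers is a hitting set for the set of all polynomials of this form. -/
/-!
Write `f = p.comp (c + d X)` with `p = ∑ⱼ c'ⱼ X^{βⱼ}`, a polynomial with at most `t + 1` monomials.
Since `x ↦ c + d x` is a bijection of `ℝ`, `f` and `p` have equally many real roots, so it is
enough to show that a nonzero real polynomial with `k` monomials has fewer than `2k` distinct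
real roots. Split off the power of `X`, which costs at most the root `0`: `p = X^m q` with
`q(0) ≠ 0`. Then `q'` has one monomial fewer than `q`, and by Rolle's theorem `q` has at most
one more distinct root than `q'`; induction on `k` finishes. A set of `2t + 2` points thus
cannot consist of roots of `f` only.
-/

open Polynomial

open Finset

namespace Polynomial

theorem card_support_X_pow_mul {R : Type*} [Semiring R] (p : R[X]) (n : ℕ) :
    #(X ^ n * p).support = #p.support := by
  have : (X ^ n * p).support = p.support.map (addRightEmbedding n) := by
    ext d
    simp only [mem_support_iff, coeff_X_pow_mul', mem_map, addRightEmbedding_apply]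
    constructor
    · intro h
      split_ifs at h with hnd
      · exact ⟨d - n, h, Nat.sub_add_cancel hnd⟩
      · exact absurd rfl h
    · rintro ⟨a, ha, rfl⟩
      simpa using ha
  rw [this, card_map]

theorem card_support_derivative_lt {R : Type*} [Semiring R] [IsAddTorsionFree R]
    {p : R[X]} (h : p.coeff 0 ≠ 0) : #(derivative p).support < #p.support := by
  have hsub : (derivative p).support.map (addRightEmbedding 1) ⊆ p.support.erase 0 := by
    intro n hn
    obtain ⟨m, hm, rfl⟩ := mem_map.mp hn
    exact mem_erase.mpr ⟨m.succ_ne_zero, mem_support_derivative.mp hm⟩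
  calc #(derivative p).support = #((derivative p).support.map (addRightEmbedding 1)) :=
        (card_map _).symm
    _ ≤ #(p.support.erase 0) := card_le_card hsub
    _ < #p.support := card_erase_lt_of_mem (mem_support_iff.mpr h)

theorem card_roots_toFinset_X_pow_mul_le {R : Type*} [CommRing R] [IsDomain R] [DecidableEq R]
    {p : R[X]} (hp : p ≠ 0) (n : ℕ) :
    #(X ^ n * p).roots.toFinset ≤ #p.roots.toFinset + 1 := by
  have hsub : (X ^ n * p).roots.toFinset ⊆ insert 0 p.roots.toFinset := by
    intro x hx
    rw [Multiset.mem_toFinset, mem_roots (mul_ne_zero (pow_ne_zero n X_ne_zero) hp), IsRoot,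
      eval_mul, eval_pow, eval_X, mul_eq_zero] at hx
    rcases hx with hx | hx
    · exact mem_insert.mpr (Or.inl (pow_eq_zero_iff'.mp hx).1)
    · exact mem_insert_of_mem (Multiset.mem_toFinset.mpr ((mem_roots hp).mpr hx))
  exact (card_le_card hsub).trans (card_insert_le _ _)

theorem card_roots_toFinset_lt_two_mul_card_support {p : ℝ[X]} (hp : p ≠ 0) :
    #p.roots.toFinset < 2 * #p.support := by
  induction hk : #p.support using Nat.strong_induction_on generalizing p with
  | _ k ih =>
  obtain ⟨q, hpq, hq⟩ := p.exists_eq_pow_rootMultiplicity_mul_and_not_dvd hp 0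
  rw [map_zero, sub_zero] at hpq hq
  rw [X_dvd_iff] at hq
  have hq0 : q ≠ 0 := fun h => hq (by rw [h, coeff_zero])
  have hroots := card_roots_toFinset_X_pow_mul_le hq0 (rootMultiplicity 0 p)
  rw [← hpq] at hroots
  rw [hpq, card_support_X_pow_mul] at hk
  by_cases hq' : derivative q = 0
  · rw [eq_C_of_derivative_eq_zero hq', roots_C] at hroots
    have : 0 < #q.support := card_pos.mpr (support_nonempty.mpr hq0)
    simp only [Multiset.toFinset_zero, card_empty] at hroots
    omega
  · have hrolle := card_roots_toFinset_le_derivative q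
    have hsupp := card_support_derivative_lt hq
    have hq'_lt := ih _ (hk ▸ hsupp) hq' rfl
    omega

theorem card_support_sum_C_mul_X_pow_le {R ι : Type*} [Semiring R] (s : Finset ι)
    (a : ι → R) (β : ι → ℕ) : #(∑ j ∈ s, C (a j) * X ^ β j).support ≤ #s := by
  classical
  have hsub : (∑ j ∈ s, C (a j) * X ^ β j).support ⊆ s.image β := by
    intro n hn
    by_contra hnβ
    refine mem_support_iff.mp hn ?_
    rw [finsetSum_coeff]
    refine sum_eq_zero fun j hj => ?_
    rw [coeff_C_mul_X_pow, if_neg fun h => hnβ (mem_image.mpr ⟨j, hj, h.symm⟩)]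
  exact (card_le_card hsub).trans card_image_le

theorem bijective_eval_C_add_C_mul_X {K : Type*} [Field K] {c d : K} (hd : d ≠ 0) :
    Function.Bijective fun x => (C c + C d * X).eval x := by
  simp only [eval_add, eval_C, eval_mul, eval_X]
  exact ⟨fun x y h => mul_left_cancel₀ hd (add_left_cancel h),
    fun y => ⟨(y - c) / d, by field_simp; ring⟩⟩

theorem finite_setOf_eval_comp_eq_zero_and_ncard_eq {R : Type*} [CommRing R] [IsDomain R]
    [DecidableEq R] {p q : R[X]} (hp : p ≠ 0) (hq : Function.Bijective fun x => q.eval x) :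
    {x | (p.comp q).eval x = 0}.Finite ∧
      {x | (p.comp q).eval x = 0}.ncard = #p.roots.toFinset := by
  have hpreimage : {x | (p.comp q).eval x = 0} = (fun x => q.eval x) ⁻¹' p.roots.toFinset := by
    ext x
    simp [eval_comp, mem_roots hp]
  rw [hpreimage, Set.ncard_preimage_of_injective_subset_range hq.injective
    (hq.surjective.range_eq ▸ Set.subset_univ _), Set.ncard_coe_finset]
  exact ⟨(finite_toSet _).preimage hq.injective.injOn, rfl⟩

end Polynomial

theorem finite_setOf_eval_sum_affine_pow_eq_zero_and_ncard_le (t : ℕ) (c' : Fin (t + 1) → ℝ)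
    (c d : ℝ) (β : Fin (t + 1) → ℕ) (hd : d ≠ 0)
    (hf : ∑ j, C (c' j) * (C c + C d * X) ^ β j ≠ 0) :
    {x : ℝ | (∑ j, C (c' j) * (C c + C d * X) ^ β j).eval x = 0}.Finite ∧
      {x : ℝ | (∑ j, C (c' j) * (C c + C d * X) ^ β j).eval x = 0}.ncard ≤ 2 * t + 1 := by
  set p : ℝ[X] := ∑ j, C (c' j) * X ^ β j
  have hcomp : ∑ j, C (c' j) * (C c + C d * X) ^ β j = p.comp (C c + C d * X) := by
    simp [p, Polynomial.sum_comp]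
  have hp : p ≠ 0 := fun h => hf (by rw [hcomp, h, zero_comp])
  rw [hcomp]
  obtain ⟨hfin, hcard⟩ := finite_setOf_eval_comp_eq_zero_and_ncard_eq hp
    (bijective_eval_C_add_C_mul_X hd)
  refine ⟨hfin, hcard ▸ ?_⟩
  have hsupp : #p.support ≤ t + 1 := by simpa using card_support_sum_C_mul_X_pow_le univ c' β
  have hroots := card_roots_toFinset_lt_two_mul_card_support hp
  omega

/-- Let `c'_0, …, c'_t, c, d` be real numbers with `d ≠ 0` and `β_0 < β_1 < … < β_t` natural
numbers. If `f = ∑_{j=0}^{t} c'_j (c + dX)^{β_j}` is not identically zero then `f` has at most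
`2t + 1` distinct real roots; consequently, any set of `2t + 2` distinct real numbers is a
hitting set for the set of all polynomials of this form. -/
theorem stmt13 (t : ℕ) :
    (∀ (c' : Fin (t + 1) → ℝ) (c d : ℝ) (β : Fin (t + 1) → ℕ),
      d ≠ 0 → StrictMono β →
      (∑ j, Polynomial.C (c' j) * (Polynomial.C c + Polynomial.C d * X) ^ β j) ≠ 0 →
      {x : ℝ | (∑ j, Polynomial.C (c' j) *
          (Polynomial.C c + Polynomial.C d * X) ^ β j).eval x = 0}.Finite ∧
        {x : ℝ | (∑ j, Polynomial.C (c' j) *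
          (Polynomial.C c + Polynomial.C d * X) ^ β j).eval x = 0}.ncard ≤ 2 * t + 1) ∧
    ∀ S : Finset ℝ, S.card = 2 * t + 2 →
      IsHittingSet (↑S : Set ℝ)
        {f : ℝ[X] | ∃ (c' : Fin (t + 1) → ℝ) (c d : ℝ) (β : Fin (t + 1) → ℕ),
          d ≠ 0 ∧ StrictMono β ∧
          f = ∑ j, Polynomial.C (c' j) * (Polynomial.C c + Polynomial.C d * X) ^ β j} := by
  refine ⟨fun c' c d β hd _ hf =>
    finite_setOf_eval_sum_affine_pow_eq_zero_and_ncard_le t c' c d β hd hf, ?_⟩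
  rintro S hS f ⟨c', c, d, β, hd, -, rfl⟩ hf
  obtain ⟨hfin, hcard⟩ := finite_setOf_eval_sum_affine_pow_eq_zero_and_ncard_le t c' c d β hd hf
  obtain ⟨θ, hθS, hθ⟩ := Set.exists_mem_notMem_of_ncard_lt_ncard
    (t := (S : Set ℝ)) (by rw [Set.ncard_coe_finset, hS]; omega) hfin
  exact ⟨θ, hθS, by rwa [coe_aeval_eq_eval]⟩
end
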